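/- arXiv:1708.00640 — 7 statements merged into one kernel-verified Lean document; each statement's English description precedes it below -/
import Mathlib

section
/- Every partial order on a torsion-free abelian group extends to a total order that is compatible with the group operation (i.e., translation-invariant). -/
/-- Fuchs: every partial order of a torsion-free abelian group extends to a
translation-invariant total order. -/
theorem fuchs_extension_torsion_free_abelian
    (G : Type*) [CommGroup G]
    (htf : ∀ g : G, g ≠ 1 → ∀ n : ℕ, n ≠ 0 → g ^ n ≠ 1)
    (r : G → G → Prop) (hr : IsPartialOrder G r)
    (hinv : ∀ a b c : G, r a b → r (a * c) (b * c)) :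
    ∃ s : G → G → Prop, IsLinearOrder G s ∧
      (∀ a b c : G, s a b → s (a * c) (b * c)) ∧
      (∀ a b : G, r a b → s a b) := by
  classical
  -- the positive cone of r
  set P : Set G := {a | r 1 a} with hPdef
  have hP1 : (1 : G) ∈ P := hr.refl 1
  have hPmul : ∀ a ∈ P, ∀ b ∈ P, a * b ∈ P := by
    intro a ha b hb
    have h1 : r a (b * a) := by
      have := hinv 1 b a hb
      rwa [one_mul] at this
    have h2 : r 1 (b * a) := hr.trans _ _ _ ha h1
    rwa [mul_comm] at h2
  have hPanti : ∀ a ∈ P, a⁻¹ ∈ P → a = 1 := by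
    intro a ha hai
    have h1 : r a 1 := by
      have := hinv 1 a⁻¹ a hai
      rwa [one_mul, inv_mul_cancel] at this
    exact hr.antisymm _ _ h1 ha
  -- the family of cones containing P
  set S : Set (Set G) :=
    {C | P ⊆ C ∧ (1 : G) ∈ C ∧ (∀ a ∈ C, ∀ b ∈ C, a * b ∈ C) ∧
      (∀ a ∈ C, a⁻¹ ∈ C → a = 1)} with hSdef
  have hPS : P ∈ S := ⟨subset_rfl, hP1, hPmul, hPanti⟩
  obtain ⟨M, hPM, hMmem, hMub⟩ := zorn_subset_nonempty S (by
    intro c hc hchain hne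
    refine ⟨⋃₀ c, ⟨?_, ?_, ?_, ?_⟩, fun s hs => Set.subset_sUnion_of_mem hs⟩
    · obtain ⟨C, hC⟩ := hne
      exact (hc hC).1.trans (Set.subset_sUnion_of_mem hC)
    · obtain ⟨C, hC⟩ := hne
      exact ⟨C, hC, (hc hC).2.1⟩
    · rintro a ⟨C₁, hC₁, ha⟩ b ⟨C₂, hC₂, hb⟩
      rcases hchain.total hC₁ hC₂ with h | h
      · exact ⟨C₂, hC₂, (hc hC₂).2.2.1 a (h ha) b hb⟩
      · exact ⟨C₁, hC₁, (hc hC₁).2.2.1 a ha b (h hb)⟩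
    · rintro a ⟨C₁, hC₁, ha⟩ ⟨C₂, hC₂, hai⟩
      rcases hchain.total hC₁ hC₂ with h | h
      · exact (hc hC₂).2.2.2 a (h ha) hai
      · exact (hc hC₁).2.2.2 a ha (h hai)) P hPS
  obtain ⟨hPM', hM1, hMmul, hManti⟩ := hMmem
  -- key step: if g ∉ M then some positive power of g⁻¹ lies in M
  have key : ∀ g : G, g ∉ M → ∃ n : ℕ, n ≠ 0 ∧ (g⁻¹) ^ n ∈ M := by
    intro g hg
    set C' : Set G := {x | ∃ c ∈ M, ∃ n : ℕ, x = c * g ^ n} with hC'def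
    have hMC' : M ⊆ C' := fun c hc => ⟨c, hc, 0, by simp⟩
    have hgC' : g ∈ C' := ⟨1, hM1, 1, by simp⟩
    have hC'notS : C' ∉ S := by
      intro hC'S
      exact hg (hMub hC'S hMC' hgC')
    -- the only possible failure is the antisymmetry condition
    have hfail : ¬ (∀ a ∈ C', a⁻¹ ∈ C' → a = 1) := by
      intro hcone
      refine hC'notS ⟨hPM'.trans hMC', hMC' hM1, ?_, hcone⟩
      rintro a ⟨c, hc, n, rfl⟩ b ⟨d, hd, m, rfl⟩
      exact ⟨c * d, hMmul c hc d hd, n + m, by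
        rw [pow_add, mul_mul_mul_comm]⟩
    push_neg at hfail
    obtain ⟨a, ⟨c, hc, n, rfl⟩, hainv, hane⟩ := hfail
    obtain ⟨d, hd, m, hdm⟩ := hainv
    have hprod : c * d * g ^ (n + m) = 1 := by
      rw [pow_add, mul_mul_mul_comm, ← hdm, mul_inv_cancel]
    rcases Nat.eq_zero_or_pos (n + m) with h0 | hpos
    · exfalso
      obtain ⟨hn0, hm0⟩ := Nat.add_eq_zero.mp h0
      subst hn0; subst hm0
      simp only [pow_zero, mul_one] at hprod hdm hane
      have : c = 1 := hManti c hc (hdm ▸ hd)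
      exact hane this
    · refine ⟨n + m, hpos.ne', ?_⟩
      have hgpow : g ^ (n + m) = (c * d)⁻¹ :=
        eq_inv_of_mul_eq_one_left (by rw [mul_comm]; exact hprod)
      rw [inv_pow, hgpow, inv_inv]
      exact hMmul c hc d hd
  have hpow : ∀ x ∈ M, ∀ k : ℕ, k ≠ 0 → x ^ k ∈ M := by
    intro x hx k hk
    induction k with
    | zero => exact absurd rfl hk
    | succ j ih =>
      rcases Nat.eq_zero_or_pos j with hj | hj
      · subst hj; simpa using hx
      · rw [pow_succ]; exact hMmul _ (ih hj.ne') _ hx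
  -- totality of the cone M
  have htot : ∀ g : G, g ∈ M ∨ g⁻¹ ∈ M := by
    intro g
    by_cases hg : g ∈ M
    · exact Or.inl hg
    by_cases hgi : g⁻¹ ∈ M
    · exact Or.inr hgi
    exfalso
    obtain ⟨n, hn0, hn⟩ := key g hg
    obtain ⟨m, hm0, hm⟩ := key g⁻¹ hgi
    rw [inv_inv] at hm
    have h1 : g ^ (m * n) ∈ M := by
      rw [pow_mul]; exact hpow _ hm n hn0
    have h2 : (g ^ (m * n))⁻¹ ∈ M := by
      have := hpow _ hn m hm0
      rwa [← pow_mul, inv_pow, Nat.mul_comm] at this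
    have hg1 : g ^ (m * n) = 1 := hManti _ h1 h2
    have : g = 1 := by
      by_contra hne
      exact htf g hne (m * n) (Nat.mul_ne_zero hm0 hn0) hg1
    exact hg (this ▸ hM1)
  -- define the linear order
  refine ⟨fun a b => a⁻¹ * b ∈ M, ?_, ?_, ?_⟩
  · refine { refl := ?_, trans := ?_, antisymm := ?_, total := ?_ }
    · intro a
      simpa using hM1
    · intro a b c hab hbc
      have := hMmul _ hab _ hbc
      rwa [mul_assoc, ← mul_assoc b, mul_inv_cancel, one_mul] at this
    · intro a b hab hba
      have hba' : (a⁻¹ * b)⁻¹ ∈ M := by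
        rwa [mul_inv_rev, inv_inv]
      have h := hManti _ hab hba'
      rwa [inv_mul_eq_one] at h
    · intro a b
      rcases htot (a⁻¹ * b) with h | h
      · exact Or.inl h
      · right
        rwa [mul_inv_rev, inv_inv] at h
  · intro a b c h
    simpa [mul_inv_rev, mul_comm, mul_assoc, mul_left_comm] using h
  · intro a b hab
    have h1 : r 1 (b * a⁻¹) := by
      have := hinv a b a⁻¹ hab
      rwa [mul_inv_cancel] at this
    have hmem : b * a⁻¹ ∈ P := h1
    have := hPM' hmem
    rwa [mul_comm] at this
end

section
/- Let t₁,…,tₙ be elements of a finitely generated free abelian group F. Then {t₁,…,tₙ} fails to extend to a total group order of F if and only if the identity e lies in the subsemigroup of F generated by {t₁,…,tₙ}. -/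
/-!
The strictly positive elements of a translation-invariant linear order form a subsemigroup
avoiding `0`, which gives one direction. Conversely, if the subsemigroup `S` generated by the `tᵢ`
avoids `0`, then `{0} ∪ S` is a positive cone, and by Zorn it lies in a maximal cone `C`.
If neither `g` nor `-g` were in `C`, then by maximality neither `C + ℕg` nor `C - ℕg` is a cone,
which forces `-(n • g) ∈ C` and `m • g ∈ C` for some `n, m ≥ 1`; hence `(n * m) • g = 0`,
impossible in a torsion-free group. So `C` is the nonnegative cone of a linear order.
-/

instance FreeAbelianGroup.instIsAddTorsionFree (α : Type*) : IsAddTorsionFree (FreeAbelianGroup α) :=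
  Function.Injective.isAddTorsionFree (FreeAbelianGroup.equivFinsupp α).toAddMonoidHom
    (FreeAbelianGroup.equivFinsupp α).injective

section StrictPositiveCone

variable {M : Type*} [AddCommMonoid M] (r : M → M → Prop) [IsTrans M r] [Std.Antisymm r]

def strictPositiveCone (hr : ∀ a b c, r a b → r (a + c) (b + c)) : AddSubsemigroup M where
  carrier := {x | r 0 x ∧ x ≠ 0}
  add_mem' := by
    rintro x y ⟨hx, hx0⟩ ⟨hy, -⟩
    have hxy : r x (x + y) := by simpa [add_comm] using hr 0 y x hy
    exact ⟨_root_.trans hx hxy, fun h => hx0 (antisymm (h ▸ hxy) hx)⟩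

end StrictPositiveCone

namespace AddGroupCone

variable {G : Type*} [AddCommGroup G]

def ofAddSubsemigroup (S : AddSubsemigroup G) (hS : (0 : G) ∉ S) : AddGroupCone G where
  carrier := insert 0 S
  add_mem' := by
    rintro a b (rfl | ha) (rfl | hb)
    all_goals simp_all [add_mem]
  zero_mem' := Set.mem_insert _ _
  eq_zero_of_mem_of_neg_mem' := by
    rintro a (rfl | ha) (hna | hna)
    · rfl
    · rfl
    · exact neg_eq_zero.mp hna
    · exact absurd (by simpa using add_mem ha hna) hS

theorem exists_upperBound_of_isChain {c : Set (AddGroupCone G)} (hc : IsChain (· ≤ ·) c)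
    (hne : c.Nonempty) : ∃ ub, ∀ C ∈ c, C ≤ ub := by
  refine ⟨{ carrier := ⋃ C ∈ c, C
            add_mem' := ?_
            zero_mem' := ?_
            eq_zero_of_mem_of_neg_mem' := ?_ }, fun C hC x hx => Set.mem_biUnion hC hx⟩
  · simp only [Set.mem_iUnion]
    rintro x y ⟨C, hC, hx⟩ ⟨D, hD, hy⟩
    rcases hc.total hC hD with hCD | hDC
    · exact ⟨D, hD, add_mem (hCD hx) hy⟩
    · exact ⟨C, hC, add_mem hx (hDC hy)⟩
  · obtain ⟨C, hC⟩ := hne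
    exact Set.mem_biUnion hC (zero_mem C)
  · simp only [Set.mem_iUnion]
    rintro x ⟨C, hC, hx⟩ ⟨D, hD, hnx⟩
    rcases hc.total hC hD with hCD | hDC
    · exact eq_zero_of_mem_of_neg_mem (hCD hx) hnx
    · exact eq_zero_of_mem_of_neg_mem hx (hDC hnx)

theorem exists_isMax_ge (C₀ : AddGroupCone G) : ∃ C, C₀ ≤ C ∧ IsMax C :=
  zorn_le_nonempty_Ici₀ C₀ (fun _ _ hc _ hy => exists_upperBound_of_isChain hc ⟨_, hy⟩) C₀ le_rfl

theorem exists_neg_nsmul_mem_of_isMax {C : AddGroupCone G} (hC : IsMax C) {g : G} (hg : g ∉ C) :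
    ∃ n ≠ 0, -(n • g) ∈ C := by
  by_contra! h
  let D : AddGroupCone G :=
    { toAddSubmonoid := C.toAddSubmonoid ⊔ AddSubmonoid.multiples g
      eq_zero_of_mem_of_neg_mem' := by
        intro a ha hna
        obtain ⟨c, hc, _, ⟨n, rfl⟩, rfl⟩ := AddSubmonoid.mem_sup.mp ha
        obtain ⟨c', hc', _, ⟨m, rfl⟩, hm⟩ := AddSubmonoid.mem_sup.mp hna
        beta_reduce at hm ⊢
        have hsum : c + c' = -((n + m) • g) := by
          rw [eq_neg_iff_add_eq_zero] at hm ⊢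
          rw [add_nsmul, ← hm]
          abel
        obtain ⟨rfl, rfl⟩ : n = 0 ∧ m = 0 := by
          by_contra hnm
          exact h (n + m) (by omega) (hsum ▸ add_mem hc hc')
        have hc' : -c ∈ C := neg_eq_of_add_eq_zero_right (by simpa using hsum) ▸ hc'
        simp [eq_zero_of_mem_of_neg_mem (C := C) hc hc'] }
  have hCD : C ≤ D := fun x hx => AddSubmonoid.mem_sup_left hx
  exact hg (hC hCD (AddSubmonoid.mem_sup_right (AddSubmonoid.mem_multiples g)))

theorem hasMemOrNegMem_of_isMax [IsAddTorsionFree G] {C : AddGroupCone G} (hC : IsMax C) :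
    HasMemOrNegMem C where
  mem_or_neg_mem g := by
    by_contra! hg
    obtain ⟨n, hn, hng⟩ := exists_neg_nsmul_mem_of_isMax hC hg.1
    obtain ⟨m, hm, hmg⟩ := exists_neg_nsmul_mem_of_isMax hC hg.2
    rw [smul_neg, neg_neg] at hmg
    have hnm : (n * m) • g = 0 := by
      refine eq_zero_of_mem_of_neg_mem (C := C) ?_ ?_
      · rw [mul_comm, mul_nsmul]; exact nsmul_mem hmg n
      · rw [mul_nsmul, ← smul_neg]; exact nsmul_mem hng m
    rcases smul_eq_zero.mp hnm with h | rfl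
    · exact (mul_ne_zero hn hm) h
    · exact hg.1 (zero_mem C)

end AddGroupCone

theorem exists_translationInvariant_linearOrder_of_zero_notMem {G : Type*} [AddCommGroup G]
    [IsAddTorsionFree G] {S : AddSubsemigroup G} (hS : (0 : G) ∉ S) :
    ∃ r : G → G → Prop, IsLinearOrder G r ∧ (∀ a b c, r a b → r (a + c) (b + c)) ∧
      ∀ x ∈ S, r 0 x ∧ x ≠ 0 := by
  obtain ⟨C, hSC, hC⟩ := (AddGroupCone.ofAddSubsemigroup S hS).exists_isMax_ge
  have := AddGroupCone.hasMemOrNegMem_of_isMax hC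
  classical
  let := LinearOrder.mkOfAddGroupCone C
  refine ⟨(· ≤ ·), inferInstance, fun a b c hab => by simpa using hab, fun x hx => ⟨?_, ?_⟩⟩
  · simpa using hSC (Or.inr hx)
  · rintro rfl
    exact hS hx

/-- Elements `t 0, …, t (n-1)` of a finitely generated free abelian group fail
to extend to a translation-invariant total order iff `0` lies in the
subsemigroup they generate. -/
theorem not_extends_order_iff_zero_mem_closure (k n : ℕ)
    (t : Fin n → FreeAbelianGroup (Fin k)) :
    ¬ (∃ r : FreeAbelianGroup (Fin k) → FreeAbelianGroup (Fin k) → Prop,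
        IsLinearOrder _ r ∧
        (∀ a b c, r a b → r (a + c) (b + c)) ∧
        (∀ i, r 0 (t i) ∧ t i ≠ 0)) ↔
      (0 : FreeAbelianGroup (Fin k)) ∈ AddSubsemigroup.closure (Set.range t) := by
  rw [not_iff_comm]
  constructor
  · intro h0
    obtain ⟨r, hr, hinv, hpos⟩ := exists_translationInvariant_linearOrder_of_zero_notMem h0
    exact ⟨r, hr, hinv, fun i => hpos _ (AddSubsemigroup.subset_closure ⟨i, rfl⟩)⟩
  · rintro ⟨r, hr, hinv, hpos⟩ h0
    have hle : AddSubsemigroup.closure (Set.range t) ≤ strictPositiveCone r hinv :=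
      AddSubsemigroup.closure_le.mpr (Set.range_subset_iff.mpr hpos)
    exact (hle h0).2 rfl
end

section
/- (Integer Gordan's theorem) For an m × n integer matrix A, exactly one of the following holds: (a) there exists y ∈ ℤ^m with every entry of yᵀA strictly negative; (b) there exists z ∈ ℕ^n, z ≠ 0, with A·z = 0. -/
open Finset Matrix

/-- Auxiliary lemma: Gordan's alternative in column-vector form, by induction on `n`. -/
lemma gordan_aux (m : ℕ) : ∀ (n : ℕ) (a : Fin n → Fin m → ℤ),
    (∃ y : Fin m → ℤ, ∀ j, y ⬝ᵥ a j < 0) ∨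
    (∃ z : Fin n → ℕ, z ≠ 0 ∧ ∑ j, (z j : ℤ) • a j = 0) := by
  intro n
  induction n with
  | zero => exact fun a => Or.inl ⟨0, fun j => j.elim0⟩
  | succ n ih =>
    intro a
    set a' : Fin n → Fin m → ℤ := fun j => a j.castSucc with ha'
    set aL : Fin m → ℤ := a (Fin.last n) with haL
    rcases ih a' with ⟨y, hy⟩ | ⟨z, hz, hsum⟩
    · by_cases hcneg : y ⬝ᵥ aL < 0
      · exact Or.inl ⟨y, fun j => Fin.lastCases hcneg hy j⟩
      push_neg at hcneg
      set c : ℤ := y ⬝ᵥ aL with hc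
      set b : Fin n → Fin m → ℤ := fun j => c • a' j - (y ⬝ᵥ a' j) • aL with hb
      have hwb : ∀ (w : Fin m → ℤ) (j : Fin n),
          w ⬝ᵥ b j = c * (w ⬝ᵥ a' j) - (y ⬝ᵥ a' j) * (w ⬝ᵥ aL) := by
        intro w j
        show w ⬝ᵥ (c • a' j - (y ⬝ᵥ a' j) • aL) = _
        rw [dotProduct_sub, dotProduct_smul, dotProduct_smul,
          smul_eq_mul, smul_eq_mul]
      rcases ih b with ⟨w, hw⟩ | ⟨u, hu, husum⟩
      · -- construct a `y'` working for all n+1 columns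
        by_cases hc0 : c = 0
        · rcases isEmpty_or_nonempty (Fin n) with hn | hn
          · -- no other columns: only `aL` matters
            by_cases haL0 : aL = 0
            · right
              refine ⟨Fin.snoc (0 : Fin n → ℕ) 1, ?_, ?_⟩
              · intro hcontra
                have := congrFun hcontra (Fin.last n)
                simp at this
              · rw [Fin.sum_univ_castSucc]
                simp only [Fin.snoc_castSucc, Fin.snoc_last, Pi.zero_apply,
                  Nat.cast_zero, Nat.cast_one, zero_smul, one_smul]
                rw [← haL, haL0]
                simp
            · left
              refine ⟨-aL, fun j => ?_⟩
              refine Fin.lastCases ?_ (fun j => isEmptyElim j) j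
              show -aL ⬝ᵥ aL < 0
              rw [neg_dotProduct]
              have h1 : 0 ≤ aL ⬝ᵥ aL :=
                Finset.sum_nonneg fun i _ => mul_self_nonneg _
              have h2 : aL ⬝ᵥ aL ≠ 0 := fun h => haL0 (dotProduct_self_eq_zero.mp h)
              have h3 : 0 < aL ⬝ᵥ aL := lt_of_le_of_ne h1 (Ne.symm h2)
              linarith
          · -- here `w ⬝ᵥ aL < 0`; take `y' = w + K • y`
            left
            obtain ⟨j1⟩ := hn
            have hwL : w ⬝ᵥ aL < 0 := by
              have h := hw j1
              rw [hwb w j1, hc0] at h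
              nlinarith [hy j1]
            set K : ℤ := 1 + ∑ j, ((w ⬝ᵥ a' j).toNat : ℤ) with hK
            have hKpos : 0 < K := by
              have : (0:ℤ) ≤ ∑ j, ((w ⬝ᵥ a' j).toNat : ℤ) :=
                Finset.sum_nonneg fun j _ => Int.ofNat_nonneg _
              omega
            have hKbig : ∀ j, w ⬝ᵥ a' j < K := by
              intro j
              have h1 : w ⬝ᵥ a' j ≤ ((w ⬝ᵥ a' j).toNat : ℤ) := Int.self_le_toNat _
              have h2 : ((w ⬝ᵥ a' j).toNat : ℤ) ≤ ∑ k, ((w ⬝ᵥ a' k).toNat : ℤ) :=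
                Finset.single_le_sum (fun k _ => Int.ofNat_nonneg _) (Finset.mem_univ j)
              omega
            have hdot : ∀ v : Fin m → ℤ, (w + K • y) ⬝ᵥ v = w ⬝ᵥ v + K * (y ⬝ᵥ v) := by
              intro v
              rw [add_dotProduct, smul_dotProduct, smul_eq_mul]
            refine ⟨w + K • y, fun j => ?_⟩
            refine Fin.lastCases ?_ (fun j => ?_) j
            · show (w + K • y) ⬝ᵥ aL < 0
              rw [hdot]
              have h0 : y ⬝ᵥ aL = 0 := by rw [← hc]; exact hc0
              rw [h0, mul_zero, add_zero]
              exact hwL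
            · show (w + K • y) ⬝ᵥ a' j < 0
              rw [hdot]
              have h1 : y ⬝ᵥ a' j ≤ -1 := by
                linarith [Int.lt_iff_add_one_le.mp (hy j)]
              have h2 : K * (y ⬝ᵥ a' j) ≤ K * (-1) :=
                mul_le_mul_of_nonneg_left h1 (le_of_lt hKpos)
              linarith [hKbig j]
        · -- c > 0 case
          left
          have hcpos : 0 < c := lt_of_le_of_ne hcneg (Ne.symm hc0)
          set T : ℤ := 1 + ∑ j, ((-(y ⬝ᵥ a' j)).toNat : ℤ) with hT
          have hTpos : 0 < T := by
            have : (0:ℤ) ≤ ∑ j, ((-(y ⬝ᵥ a' j)).toNat : ℤ) :=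
              Finset.sum_nonneg fun j _ => Int.ofNat_nonneg _
            omega
          have hTbig : ∀ j, -(y ⬝ᵥ a' j) < T := by
            intro j
            have h1 : -(y ⬝ᵥ a' j) ≤ ((-(y ⬝ᵥ a' j)).toNat : ℤ) := Int.self_le_toNat _
            have h2 : ((-(y ⬝ᵥ a' j)).toNat : ℤ) ≤ ∑ k, ((-(y ⬝ᵥ a' k)).toNat : ℤ) :=
              Finset.single_le_sum (fun k _ => Int.ofNat_nonneg _) (Finset.mem_univ j)
            omega
          have hdot : ∀ v : Fin m → ℤ,
              (T • (c • w - (w ⬝ᵥ aL) • y) - y) ⬝ᵥ v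
                = T * (c * (w ⬝ᵥ v) - (w ⬝ᵥ aL) * (y ⬝ᵥ v)) - y ⬝ᵥ v := by
            intro v
            rw [sub_dotProduct, smul_dotProduct, sub_dotProduct,
              smul_dotProduct, smul_dotProduct, smul_eq_mul,
              smul_eq_mul, smul_eq_mul]
          refine ⟨T • (c • w - (w ⬝ᵥ aL) • y) - y, fun j => ?_⟩
          refine Fin.lastCases ?_ (fun j => ?_) j
          · show (T • (c • w - (w ⬝ᵥ aL) • y) - y) ⬝ᵥ aL < 0
            rw [hdot]
            have h0 : y ⬝ᵥ aL = c := hc.symm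
            rw [h0]
            have he : c * (w ⬝ᵥ aL) - (w ⬝ᵥ aL) * c = 0 := by ring
            rw [he, mul_zero, zero_sub]
            linarith
          · show (T • (c • w - (w ⬝ᵥ aL) • y) - y) ⬝ᵥ a' j < 0
            rw [hdot]
            have hwbj : c * (w ⬝ᵥ a' j) - (y ⬝ᵥ a' j) * (w ⬝ᵥ aL) ≤ -1 := by
              have h := hw j
              rw [hwb w j] at h
              linarith [Int.lt_iff_add_one_le.mp h]
            have hs : c * (w ⬝ᵥ a' j) - (w ⬝ᵥ aL) * (y ⬝ᵥ a' j) ≤ -1 := by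
              linarith [hwbj, mul_comm (y ⬝ᵥ a' j) (w ⬝ᵥ aL)]
            have h3 : T * (c * (w ⬝ᵥ a' j) - (w ⬝ᵥ aL) * (y ⬝ᵥ a' j)) ≤ T * (-1) :=
              mul_le_mul_of_nonneg_left hs (le_of_lt hTpos)
            linarith [hTbig j]
      · -- construct a nonzero nonnegative `z`
        right
        set wj : Fin n → ℕ := fun j => (-(y ⬝ᵥ a' j)).toNat with hwj
        have hwjpos : ∀ j, 0 < wj j := by
          intro j
          have h := hy j
          simp only [hwj]
          omega
        have hwjcast : ∀ j, (wj j : ℤ) = -(y ⬝ᵥ a' j) := by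
          intro j
          simp only [hwj]
          exact Int.toNat_of_nonneg (by linarith [hy j])
        refine ⟨Fin.snoc (fun j => c.toNat * u j) (∑ j, u j * wj j), ?_, ?_⟩
        · obtain ⟨j0, hj0⟩ := Function.ne_iff.mp hu
          intro hcontra
          have hlast : (∑ j, u j * wj j) = 0 := by
            have := congrFun hcontra (Fin.last n)
            simpa using this
          have hle : u j0 * wj j0 ≤ ∑ j, u j * wj j :=
            Finset.single_le_sum (f := fun j => u j * wj j)
              (fun j _ => Nat.zero_le _) (Finset.mem_univ j0)
          have : 0 < u j0 * wj j0 := Nat.mul_pos (Nat.pos_of_ne_zero hj0) (hwjpos j0)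
          omega
        · rw [Fin.sum_univ_castSucc]
          simp only [Fin.snoc_castSucc, Fin.snoc_last]
          have key : (∑ j : Fin n, ((c.toNat * u j : ℕ) : ℤ) • a' j)
              + ((∑ j, u j * wj j : ℕ) : ℤ) • aL = ∑ j, (u j : ℤ) • b j := by
            push_cast
            rw [Finset.sum_smul, ← Finset.sum_add_distrib]
            refine Finset.sum_congr rfl fun j _ => ?_
            have hbj : b j = c • a' j - (y ⬝ᵥ a' j) • aL := by rw [hb]
            funext i
            simp only [hbj, Pi.add_apply, Pi.smul_apply, Pi.sub_apply, smul_eq_mul]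
            rw [Int.toNat_of_nonneg hcneg, hwjcast j]
            ring
          calc (∑ j : Fin n, ((c.toNat * u j : ℕ) : ℤ) • a j.castSucc)
                + ((∑ j, u j * wj j : ℕ) : ℤ) • a (Fin.last n)
              = ∑ j, (u j : ℤ) • b j := key
            _ = 0 := husum
    · -- extend z by 0
      right
      refine ⟨Fin.snoc z 0, ?_, ?_⟩
      · obtain ⟨j0, hj0⟩ := Function.ne_iff.mp hz
        intro hcontra
        exact hj0 (by simpa using congrFun hcontra j0.castSucc)
      · rw [Fin.sum_univ_castSucc]
        simpa using hsum

/-- The two alternatives are mutually exclusive. -/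
lemma gordan_not_both {m n : ℕ} (A : Matrix (Fin m) (Fin n) ℤ)
    {y : Fin m → ℤ} (hy : ∀ j, Matrix.vecMul y A j < 0)
    {z : Fin n → ℕ} (hz : z ≠ 0) (hAz : A.mulVec (fun j => (z j : ℤ)) = 0) :
    False := by
  have h0 : y ⬝ᵥ A.mulVec (fun j => (z j : ℤ)) = 0 := by rw [hAz]; simp
  rw [Matrix.dotProduct_mulVec] at h0
  obtain ⟨j0, hj0⟩ := Function.ne_iff.mp hz
  have hlt : (∑ j, Matrix.vecMul y A j * (z j : ℤ)) < ∑ j : Fin n, (0:ℤ) := by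
    refine Finset.sum_lt_sum (fun j _ => ?_) ⟨j0, Finset.mem_univ j0, ?_⟩
    · exact mul_nonpos_of_nonpos_of_nonneg (le_of_lt (hy j)) (Int.ofNat_nonneg _)
    · exact mul_neg_of_neg_of_pos (hy j0) (by exact_mod_cast Nat.pos_of_ne_zero hj0)
  rw [Finset.sum_const_zero] at hlt
  rw [dotProduct] at h0
  rw [h0] at hlt
  exact lt_irrefl 0 hlt

/-- Integer Gordan theorem: exactly one of (a) and (b) holds. -/
theorem integer_gordan (m n : ℕ) (A : Matrix (Fin m) (Fin n) ℤ) :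
    Xor' (∃ y : Fin m → ℤ, ∀ j, Matrix.vecMul y A j < 0)
         (∃ z : Fin n → ℕ, z ≠ 0 ∧ A.mulVec (fun j => (z j : ℤ)) = 0) := by
  rcases gordan_aux m n (fun j i => A i j) with ⟨y, hy⟩ | ⟨z, hz, hs⟩
  · left
    constructor
    · refine ⟨y, fun j => ?_⟩
      have := hy j
      simpa [Matrix.vecMul, dotProduct] using this
    · rintro ⟨z, hz, hAz⟩
      refine gordan_not_both A (y := y) (fun j => ?_) hz hAz
      have := hy j
      simpa [Matrix.vecMul, dotProduct] using this
  · right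
    have hAz : A.mulVec (fun j => (z j : ℤ)) = 0 := by
      funext i
      have := congrFun hs i
      simp only [Finset.sum_apply, Pi.smul_apply, smul_eq_mul, Pi.zero_apply] at this
      simp only [Matrix.mulVec, dotProduct, Pi.zero_apply]
      rw [← this]
      exact Finset.sum_congr rfl fun j _ => mul_comm _ _
    constructor
    · exact ⟨z, hz, hAz⟩
    · rintro ⟨y, hy⟩
      exact gordan_not_both A hy hz hAz
end

section
/- (Fuchs ordering theorem) A subset S of a group G extends to a total two-sided order of G if and only if for every finite list a₁,…,a_m of non-identity elements of G there exist signs δ₁,…,δ_m ∈ {−1,1} such that e is not in the normal subsemigroup of G generated by S ∪ {a₁^{δ₁},…,a_m^{δ_m}}. -/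
/-- The normal subsemigroup of `G` generated by `T`: the subsemigroup generated
by all conjugates of elements of `T`. -/
def normalSubsemigroupClosure (G : Type*) [Group G] (T : Set G) : Subsemigroup G :=
  Subsemigroup.closure {x : G | ∃ t ∈ T, ∃ g : G, x = g * t * g⁻¹}

/-!
An order is the same thing as its positive cone `P = {x | 1 < x}`: a subsemigroup closed under
conjugation, with `G = P ⊔ {1} ⊔ P⁻¹`. Such a cone containing `S` makes the sign condition obvious
(give each `aᵢ` the sign putting it in `P`). Conversely, the sign condition says that for every
finite `F ⊆ G` some choice of signs on `F` is consistent with `S`; by Rado's selection principle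
(compactness of `G → Bool`) these local choices glue to one global choice `ε`, and the normal
subsemigroups generated by `S` and the `ε`-signed elements of the finite subsets of `G` form a
directed family avoiding `1`, whose union is the required cone.
-/

section

variable {G : Type*} [Group G]

theorem normalSubsemigroupClosure_mono {T U : Set G} (h : T ⊆ U) :
    normalSubsemigroupClosure G T ≤ normalSubsemigroupClosure G U :=
  Subsemigroup.closure_mono fun _ ⟨t, ht, g, hx⟩ => ⟨t, h ht, g, hx⟩

theorem subset_normalSubsemigroupClosure (T : Set G) :
    T ⊆ normalSubsemigroupClosure G T :=
  fun t ht => Subsemigroup.subset_closure ⟨t, ht, 1, by group⟩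

theorem conj_mem_normalSubsemigroupClosure {T : Set G} {x : G}
    (hx : x ∈ normalSubsemigroupClosure G T) (g : G) :
    g * x * g⁻¹ ∈ normalSubsemigroupClosure G T := by
  induction hx using Subsemigroup.closure_induction with
  | mem y hy =>
    obtain ⟨t, ht, h, rfl⟩ := hy
    exact Subsemigroup.subset_closure ⟨t, ht, g * h, by group⟩
  | mul x y _ _ hx hy =>
    rw [show g * (x * y) * g⁻¹ = (g * x * g⁻¹) * (g * y * g⁻¹) by group]
    exact mul_mem hx hy

theorem normalSubsemigroupClosure_subset {T P : Set G}
    (hmul : ∀ x ∈ P, ∀ y ∈ P, x * y ∈ P) (hconj : ∀ x ∈ P, ∀ g : G, g * x * g⁻¹ ∈ P)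
    (hT : T ⊆ P) : (normalSubsemigroupClosure G T : Set G) ⊆ P :=
  (Subsemigroup.closure_le (S := ⟨P, fun {x y} hx hy => hmul x hx y hy⟩)).mpr
    fun _ ⟨t, ht, g, hx⟩ => hx ▸ hconj t (hT ht) g

structure IsTotalNormalCone (P : Set G) : Prop where
  mul_mem : ∀ x ∈ P, ∀ y ∈ P, x * y ∈ P
  conj_mem : ∀ x ∈ P, ∀ g : G, g * x * g⁻¹ ∈ P
  one_notMem : (1 : G) ∉ P
  mem_or_inv_mem : ∀ g : G, g ≠ 1 → g ∈ P ∨ g⁻¹ ∈ P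

theorem IsTotalNormalCone.exists_signs {P S : Set G} (hP : IsTotalNormalCone P) (hSP : S ⊆ P)
    {ι : Type*} (a : ι → G) (ha : ∀ i, a i ≠ 1) :
    ∃ δ : ι → Bool, (1 : G) ∉ normalSubsemigroupClosure G
      (S ∪ Set.range fun i => if δ i then a i else (a i)⁻¹) := by
  classical
  refine ⟨fun i => decide (a i ∈ P), fun h1 => hP.one_notMem ?_⟩
  refine normalSubsemigroupClosure_subset hP.mul_mem hP.conj_mem ?_ h1
  rintro _ (hs | ⟨i, rfl⟩)
  · exact hSP hs
  · by_cases hi : a i ∈ P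
    · simp [hi]
    · simpa [hi] using (hP.mem_or_inv_mem _ (ha i)).resolve_left hi

section OrderToCone

variable {r : G → G → Prop} [IsLinearOrder G r]

def positiveCone (r : G → G → Prop) : Set G := {x | r 1 x ∧ x ≠ 1}

theorem isTotalNormalCone_positiveCone (hr : ∀ a b c d : G, r a b → r (c * a * d) (c * b * d)) :
    IsTotalNormalCone (positiveCone r) where
  mul_mem x hx y hy := by
    have hxy : r x (x * y) := by simpa using hr _ _ x 1 hy.1
    refine ⟨trans_of r hx.1 hxy, fun h => hx.2 ?_⟩
    have hinv : r x⁻¹ 1 := by simpa using hr _ _ x⁻¹ 1 hx.1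
    have hyx : y = x⁻¹ := eq_inv_of_mul_eq_one_right h
    exact inv_eq_one.mp (antisymm hinv (hyx ▸ hy.1))
  conj_mem x hx g := ⟨by simpa using hr _ _ g g⁻¹ hx.1, by simpa using hx.2⟩
  one_notMem h := h.2 rfl
  mem_or_inv_mem g hg := by
    rcases total_of r 1 g with h | h
    · exact Or.inl ⟨h, hg⟩
    · exact Or.inr ⟨by simpa using hr _ _ g⁻¹ 1 h, inv_ne_one.mpr hg⟩

end OrderToCone

section ConeToOrder

def coneLE (P : Set G) (a b : G) : Prop := a = b ∨ b * a⁻¹ ∈ P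

variable {P : Set G}

theorem IsTotalNormalCone.isLinearOrder_coneLE (hP : IsTotalNormalCone P) :
    IsLinearOrder G (coneLE P) where
  refl _ := Or.inl rfl
  trans a b c := by
    rintro (rfl | hab) (rfl | hbc)
    · exact Or.inl rfl
    · exact Or.inr hbc
    · exact Or.inr hab
    · rw [coneLE, show c * a⁻¹ = (c * b⁻¹) * (b * a⁻¹) by group]
      exact Or.inr (hP.mul_mem _ hbc _ hab)
  antisymm a b := by
    rintro (rfl | hab) (h | hba)
    · rfl
    · rfl
    · exact h.symm
    · refine absurd ?_ hP.one_notMem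
      rw [show (1 : G) = (b * a⁻¹) * (a * b⁻¹) by group]
      exact hP.mul_mem _ hab _ hba
  total a b := by
    by_cases h : b * a⁻¹ = 1
    · exact Or.inl (Or.inl (mul_inv_eq_one.mp h).symm)
    · rcases hP.mem_or_inv_mem _ h with hp | hp
      · exact Or.inl (Or.inr hp)
      · exact Or.inr (Or.inr (by simpa using hp))

theorem coneLE_mul_mul (hconj : ∀ x ∈ P, ∀ g : G, g * x * g⁻¹ ∈ P) {a b : G} (c d : G)
    (h : coneLE P a b) : coneLE P (c * a * d) (c * b * d) := by
  rcases h with rfl | hab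
  · exact Or.inl rfl
  · rw [coneLE, show c * b * d * (c * a * d)⁻¹ = c * (b * a⁻¹) * c⁻¹ by group]
    exact Or.inr (hconj _ hab c)

theorem coneLE_one_of_mem {x : G} (hx : x ∈ P) : coneLE P 1 x :=
  Or.inr (by simpa using hx)

end ConeToOrder

section SignsToCone

def signedImage (ε : G → Bool) (F : Set G) : Set G :=
  (fun g => if ε g then g else g⁻¹) '' (F \ {1})

theorem signedImage_subset_of_eqOn {ε ε' : G → Bool} {F F' : Set G} (hF : F ⊆ F')
    (h : Set.EqOn ε ε' F) : signedImage ε F ⊆ signedImage ε' F' := by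
  rintro _ ⟨g, hg, rfl⟩
  exact ⟨g, Set.sdiff_subset_sdiff_left hF hg, by simp only [h hg.1]⟩

variable {S : Set G}

theorem exists_signs_finset_of_forall_fin
    (h : ∀ (m : ℕ) (a : Fin m → G), (∀ i, a i ≠ 1) → ∃ δ : Fin m → Bool,
      (1 : G) ∉ normalSubsemigroupClosure G
        (S ∪ Set.range fun i => if δ i then a i else (a i)⁻¹))
    (F : Finset G) :
    ∃ ε : G → Bool, (1 : G) ∉ normalSubsemigroupClosure G (S ∪ signedImage ε F) := by
  classical
  let e := (F.erase 1).equivFin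
  obtain ⟨δ, hδ⟩ := h _ (fun i => (e.symm i : G)) fun i => Finset.ne_of_mem_erase (e.symm i).2
  refine ⟨fun g => if hg : g ∈ F.erase 1 then δ (e ⟨g, hg⟩) else true,
    fun h1 => hδ (normalSubsemigroupClosure_mono (Set.union_subset_union_right S ?_) h1)⟩
  rintro _ ⟨g, hg, rfl⟩
  have hg' : g ∈ F.erase 1 := by simpa [and_comm] using hg
  exact ⟨e ⟨g, hg'⟩, by simp [hg']⟩

theorem exists_global_signs
    (h : ∀ F : Finset G, ∃ ε : G → Bool,
      (1 : G) ∉ normalSubsemigroupClosure G (S ∪ signedImage ε F)) :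
    ∃ ε : G → Bool, ∀ F : Finset G,
      (1 : G) ∉ normalSubsemigroupClosure G (S ∪ signedImage ε F) := by
  choose ε hε using h
  obtain ⟨χ, hχ⟩ := Finset.rado_selection ε
  refine ⟨χ, fun F h1 => ?_⟩
  obtain ⟨F', hFF', hχF⟩ := hχ F
  exact hε F' (normalSubsemigroupClosure_mono (Set.union_subset_union_right S
    (signedImage_subset_of_eqOn (Finset.coe_subset.mpr hFF') hχF)) h1)

def signedCone (S : Set G) (ε : G → Bool) : Set G :=
  ⋃ F : Finset G, normalSubsemigroupClosure G (S ∪ signedImage ε F)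

theorem subset_signedCone (ε : G → Bool) : S ⊆ signedCone S ε :=
  fun _ hs => Set.mem_iUnion.mpr ⟨∅, subset_normalSubsemigroupClosure _ (Or.inl hs)⟩

theorem isTotalNormalCone_signedCone {ε : G → Bool}
    (hε : ∀ F : Finset G, (1 : G) ∉ normalSubsemigroupClosure G (S ∪ signedImage ε F)) :
    IsTotalNormalCone (signedCone S ε) where
  mul_mem x hx y hy := by
    classical
    obtain ⟨F₁, hx⟩ := Set.mem_iUnion.mp hx
    obtain ⟨F₂, hy⟩ := Set.mem_iUnion.mp hy
    have hmono {F : Finset G} (hF : F ⊆ F₁ ∪ F₂) :=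
      normalSubsemigroupClosure_mono (Set.union_subset_union_right S
        (signedImage_subset_of_eqOn (ε := ε) (Finset.coe_subset.mpr hF) (Set.eqOn_refl _ _)))
    exact Set.mem_iUnion.mpr ⟨F₁ ∪ F₂, mul_mem (hmono Finset.subset_union_left hx)
      (hmono Finset.subset_union_right hy)⟩
  conj_mem x hx g := by
    obtain ⟨F, hx⟩ := Set.mem_iUnion.mp hx
    exact Set.mem_iUnion.mpr ⟨F, conj_mem_normalSubsemigroupClosure hx g⟩
  one_notMem h1 := by
    obtain ⟨F, h1⟩ := Set.mem_iUnion.mp h1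
    exact hε F h1
  mem_or_inv_mem g hg := by
    have hmem : (if ε g then g else g⁻¹) ∈ signedCone S ε :=
      Set.mem_iUnion.mpr ⟨{g}, subset_normalSubsemigroupClosure _
        (Or.inr ⟨g, by simpa using hg, rfl⟩)⟩
    cases hεg : ε g
    · exact Or.inr (by simpa [hεg] using hmem)
    · exact Or.inl (by simpa [hεg] using hmem)

end SignsToCone

end

/-- Fuchs: `S` extends to a two-sided total order of `G` iff for every finite
list of non-identity elements there is a choice of signs keeping `1` out of the
generated normal subsemigroup. -/
theorem fuchs_ordering_theorem (G : Type*) [Group G] (S : Set G) :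
    (∃ r : G → G → Prop, IsLinearOrder G r ∧
        (∀ a b c d : G, r a b → r (c * a * d) (c * b * d)) ∧
        (∀ s ∈ S, r 1 s ∧ s ≠ 1)) ↔
      (∀ (m : ℕ) (a : Fin m → G), (∀ i, a i ≠ 1) →
        ∃ δ : Fin m → Bool,
          (1 : G) ∉ normalSubsemigroupClosure G
            (S ∪ Set.range (fun i => if δ i then a i else (a i)⁻¹))) := by
  constructor
  · rintro ⟨r, hlin, hr, hS⟩ m a ha
    exact (isTotalNormalCone_positiveCone hr).exists_signs (fun s hs => hS s hs) a ha
  · intro h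
    obtain ⟨ε, hε⟩ := exists_global_signs (exists_signs_finset_of_forall_fin h)
    have hP := isTotalNormalCone_signedCone hε
    refine ⟨coneLE (signedCone S ε), hP.isLinearOrder_coneLE,
      fun a b c d => coneLE_mul_mul hP.conj_mem c d, fun s hs => ?_⟩
    have hsP := subset_signedCone ε hs
    exact ⟨coneLE_one_of_mem hsP, fun hs1 => hP.one_notMem (hs1 ▸ hsP)⟩
end

section
/- Let t₁,…,tₙ be elements of the free group F(k). The inequality e ≤ t₁ ∨ … ∨ tₙ holds in all ℓ-groups if and only if {t₁,…,tₙ} does not extend to a right order of F(k). -/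
/-!
If `{tᵢ}` lies in the positive cone of a right order `≤` of `F = F(k)`, then `F` acts on the chain
`(F, ≤)` by the order automorphisms `x ↦ x g⁻¹`. In the ℓ-group of all order automorphisms of
`(F, ≤)`, the element `⋁ tᵢ` sends `e` to `max tᵢ⁻¹ < e`, so `e ≤ ⋁ tᵢ` fails there.

Conversely, suppose `e ≰ s := ⋁ φ(tᵢ)` in an ℓ-group `L`. A convex ℓ-subgroup `M` that is maximal
among those not containing `s⁻¹ ∨ e` is prime, so the right cosets of `M` are totally ordered, and
every `Mφ(tᵢ)` lies strictly below `M`. Pulled back along `φ` and reversed, this is a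
right-invariant total preorder on `F` in which every `tᵢ` is strictly above `e`. Refining it
lexicographically by some right order of `F` gives the required right order; such an order exists
because ping-pong makes `F` act faithfully on `ℚ` by order automorphisms.
-/

open Set

/-! ### The ℓ-group of order automorphisms of a chain -/

namespace OrderIso

variable {α : Type*} [LinearOrder α]

instance : PartialOrder (α ≃o α) := PartialOrder.lift (⇑) DFunLike.coe_injective

noncomputable instance : Max (α ≃o α) where
  max f g := StrictMono.orderIsoOfSurjective (⇑f ⊔ ⇑g)
    (fun _ _ hab => max_lt_max (f.strictMono hab) (g.strictMono hab)) fun y => by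
      refine ⟨min (f.symm y) (g.symm y), ?_⟩
      rcases le_total (f.symm y) (g.symm y) with h | h
      · simpa [min_eq_left h] using g.le_symm_apply.mp h
      · simpa [min_eq_right h] using f.le_symm_apply.mp h

noncomputable instance : Min (α ≃o α) where
  min f g := StrictMono.orderIsoOfSurjective (⇑f ⊓ ⇑g)
    (fun _ _ hab => min_lt_min (f.strictMono hab) (g.strictMono hab)) fun y => by
      refine ⟨max (f.symm y) (g.symm y), ?_⟩
      rcases le_total (f.symm y) (g.symm y) with h | h
      · simpa [max_eq_right h] using f.symm_apply_le.mp h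
      · simpa [max_eq_left h] using g.symm_apply_le.mp h

noncomputable instance : Lattice (α ≃o α) :=
  DFunLike.coe_injective.lattice _ Iff.rfl Iff.rfl (fun _ _ => rfl) (fun _ _ => rfl)

instance : MulLeftMono (α ≃o α) := ⟨fun f _ _ h x => f.monotone (h x)⟩

instance : MulRightMono (α ≃o α) := ⟨fun f _ _ h x => h (f x)⟩

theorem finset_sup'_apply {ι : Type*} {s : Finset ι} (hs : s.Nonempty) (f : ι → α ≃o α) (x : α) :
    s.sup' hs f x = s.sup' hs fun i => f i x :=
  Finset.apply_sup'_eq_sup'_comp hs (fun g : α ≃o α => g x) fun _ _ => rfl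

end OrderIso

section RightOrderedGroup

variable {G : Type*} [Group G] [LinearOrder G] [MulRightMono G]

def OrderIso.mulRightInvHom : G →* (G ≃o G) where
  toFun g := OrderIso.mulRight g⁻¹
  map_one' := by ext; simp
  map_mul' g h := by ext; simp [mul_assoc]

theorem not_one_le_sup'_mulRightInvHom {ι : Type*} {s : Finset ι} (hs : s.Nonempty) {t : ι → G}
    (ht : ∀ i ∈ s, 1 < t i) : ¬ 1 ≤ s.sup' hs fun i => OrderIso.mulRightInvHom (t i) := by
  intro h
  obtain ⟨i, hi, hle⟩ := (Finset.le_sup'_iff hs).mp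
    ((h 1).trans_eq (OrderIso.finset_sup'_apply hs _ 1))
  have : 1 * t i ≤ (t i)⁻¹ * t i :=
    mul_le_mul_left (by simpa [OrderIso.mulRightInvHom] using hle) _
  exact (ht i hi).not_ge (by simpa using this)

end RightOrderedGroup

noncomputable abbrev linearOrderOfIsLinearOrder {α : Type*} (r : α → α → Prop)
    [IsLinearOrder α r] : LinearOrder α where
  le := r
  le_refl := refl_of r
  le_trans _ _ _ := trans_of r
  le_antisymm _ _ := antisymm_of r
  le_total := total_of r
  toDecidableLE := Classical.decRel r

/-! ### Right orders from faithful actions on countable chains -/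

theorem Pi.Lex.strictMono_comp {ι β γ : Type*} [LinearOrder ι] [PartialOrder β] [PartialOrder γ]
    {f : β → γ} (hf : StrictMono f) : StrictMono fun x : Lex (ι → β) => toLex (f ∘ ofLex x) :=
  fun _ _ ⟨i, hi, hlt⟩ => ⟨i, fun j hj => congrArg f (hi j hj), hf hlt⟩

theorem exists_rightOrder_of_injective_orderIso {G α : Type*} [Group G] [LinearOrder α]
    [Countable α] [Nonempty α] (ρ : G →* (α ≃o α)) (hρ : Function.Injective ρ) :
    ∃ r : G → G → Prop, IsLinearOrder G r ∧ ∀ a b c, r a b → r (a * c) (b * c) := by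
  obtain ⟨e, he⟩ := exists_surjective_nat α
  -- `g < g'` iff `g⁻¹ x < g'⁻¹ x` at the first point `x` of the enumeration `e` where they differ
  let key : G → Lex (ℕ → α) := fun g => toLex fun n => ρ g⁻¹ (e n)
  have key_injective : Function.Injective key := fun a b h => by
    have : ρ a⁻¹ = ρ b⁻¹ := RelIso.ext (he.forall.mpr (congrFun h))
    exact inv_injective (hρ this)
  let := LinearOrder.lift' key key_injective
  refine ⟨(· ≤ ·), inferInstance, fun a b c h => ?_⟩
  have key_mul : ∀ g, key (g * c) = toLex (ρ c⁻¹ ∘ ofLex (key g)) := fun g => by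
    simp only [key, mul_inv_rev, map_mul]
    rfl
  change key (a * c) ≤ key (b * c)
  rw [key_mul, key_mul]
  exact (Pi.Lex.strictMono_comp (ρ c⁻¹).strictMono).monotone h

/-! ### Ping-pong on `ℚ` -/

-- For `N > 1`, this maps `[0, N - 1)` onto `[0, 1)` and `[N - 1, N)` onto `[1, N)`.
def compress (N s : ℚ) : ℚ :=
  if s < N - 1 then s / (N - 1) else (N - 1) * (s - (N - 1)) + 1

section Compress

variable {N : ℚ} (hN : 1 < N)
include hN

theorem compress_strictMono : StrictMono (compress N) := by
  intro s t hst
  have h : 0 < N - 1 := by linarith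
  unfold compress
  split_ifs with hs ht ht
  · exact div_lt_div_of_pos_right hst h
  · have : s / (N - 1) < 1 := (div_lt_one h).mpr hs
    nlinarith
  · linarith
  · nlinarith

theorem compress_surjective : Function.Surjective (compress N) := by
  intro y
  have h : 0 < N - 1 := by linarith
  by_cases hy : y < 1
  · refine ⟨(N - 1) * y, ?_⟩
    rw [compress, if_pos (by nlinarith)]
    field_simp
  · refine ⟨(y - 1) / (N - 1) + (N - 1), ?_⟩
    have : 0 ≤ (y - 1) / (N - 1) := div_nonneg (by linarith) h.le
    rw [compress, if_neg (by linarith)]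
    field_simp
    ring

noncomputable def compressIso : ℚ ≃o ℚ :=
  StrictMono.orderIsoOfSurjective _ (compress_strictMono hN) (compress_surjective hN)

theorem compressIso_apply (s : ℚ) : compressIso hN s = compress N s := rfl

theorem compressIso_zero : compressIso hN 0 = 0 := by
  simp [compressIso_apply, compress, hN]

theorem compressIso_self : compressIso hN N = N := by
  simp [compressIso_apply, compress]

end Compress

theorem OrderIso.mapsTo_Ico {α : Type*} [Preorder α] {g : α ≃o α} {a b : α} (ha : g a = a)
    (hb : g b = b) : MapsTo g (Ico a b) (Ico a b) :=
  fun _ ⟨h0, h1⟩ => ⟨ha ▸ g.monotone h0, hb ▸ g.strictMono h1⟩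

section Periodize

variable {p : ℚ} (hp : 0 < p)

noncomputable def periodize (g : ℚ ≃o ℚ) (x : ℚ) : ℚ :=
  toIcoDiv hp 0 x • p + g (toIcoMod hp 0 x)

include hp in
theorem exists_zsmul_add_eq (x : ℚ) : ∃ n : ℤ, ∃ s ∈ Ico 0 p, n • p + s = x := by
  obtain ⟨n, hn, -⟩ := existsUnique_sub_zsmul_mem_Ico hp x 0
  exact ⟨n, x - n • p, by simpa using hn, by abel⟩

theorem periodize_zsmul_add (g : ℚ ≃o ℚ) (n : ℤ) {s : ℚ} (hs : s ∈ Ico 0 p) :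
    periodize hp g (n • p + s) = n • p + g s := by
  have hs' : s ∈ Ico 0 (0 + p) := by rwa [zero_add]
  rw [periodize, toIcoDiv_eq_of_sub_zsmul_mem_Ico hp (n := n) (by simpa using hs'),
    (toIcoMod_eq_iff hp).mpr ⟨hs', n, add_comm _ _⟩]

variable {g : ℚ ≃o ℚ} (hg0 : g 0 = 0) (hgp : g p = p)
include hg0 hgp

theorem periodize_strictMono : StrictMono (periodize hp g) := by
  intro x y hxy
  obtain ⟨a, s, hs, rfl⟩ := exists_zsmul_add_eq hp x
  obtain ⟨b, t, ht, rfl⟩ := exists_zsmul_add_eq hp y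
  have hgs := OrderIso.mapsTo_Ico hg0 hgp hs
  have hgt := OrderIso.mapsTo_Ico hg0 hgp ht
  rw [periodize_zsmul_add hp g a hs, periodize_zsmul_add hp g b ht]
  simp only [mem_Ico, zsmul_eq_mul] at hs ht hgs hgt hxy ⊢
  rcases lt_trichotomy a b with hab | rfl | hab
  · have : (a : ℚ) + 1 ≤ b := by exact_mod_cast hab
    nlinarith
  · linarith [g.strictMono (show s < t by linarith)]
  · have : (b : ℚ) + 1 ≤ a := by exact_mod_cast hab
    nlinarith

theorem periodize_surjective : Function.Surjective (periodize hp g) := by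
  intro y
  obtain ⟨n, s, hs, rfl⟩ := exists_zsmul_add_eq hp y
  have hs' := OrderIso.mapsTo_Ico (g := g.symm) (g.symm_apply_eq.mpr hg0.symm)
    (g.symm_apply_eq.mpr hgp.symm) hs
  exact ⟨n • p + g.symm s, by rw [periodize_zsmul_add hp g n hs', g.apply_symm_apply]⟩

noncomputable def periodizeIso : ℚ ≃o ℚ :=
  StrictMono.orderIsoOfSurjective _ (periodize_strictMono hp hg0 hgp)
    (periodize_surjective hp hg0 hgp)

theorem periodizeIso_apply (x : ℚ) : periodizeIso hp hg0 hgp x = periodize hp g x := rfl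

end Periodize

def floorMod (M : ℕ) (x : ℚ) : ZMod M := (⌊x⌋ : ZMod M)

section FloorMod

variable {M : ℕ}

theorem floorMod_add_natCast (x : ℚ) (n : ℕ) : floorMod M (x + n) = floorMod M x + n := by
  simp [floorMod, Int.floor_add_natCast]

theorem floorMod_zsmul_add (n : ℤ) (x : ℚ) : floorMod M (n • (M : ℚ) + x) = floorMod M x := by
  have : n • (M : ℚ) = ((n * M : ℤ) : ℚ) := by push_cast [zsmul_eq_mul]; ring
  simp only [floorMod]
  rw [this, Int.floor_intCast_add]
  simp

theorem floorMod_eq_neg_one {s : ℚ} (hs : s ∈ Ico 0 (M : ℚ)) (hs' : (M : ℚ) - 1 ≤ s) :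
    floorMod M s = -1 := by
  have : ⌊s⌋ = (M : ℤ) - 1 :=
    Int.floor_eq_iff.mpr ⟨by push_cast; linarith, by push_cast; linarith [hs.2]⟩
  simp [floorMod, this]

theorem floorMod_conj_addRight {h : ℚ ≃o ℚ} {u v : ZMod M}
    (hh : ∀ x, floorMod M x ≠ u → floorMod M (h x) = v) (n : ℕ) {x : ℚ}
    (hx : floorMod M x ≠ u + n) :
    floorMod M (MulAut.conj (OrderIso.addRight (n : ℚ)) h x) = v + n := by
  have hconj : MulAut.conj (OrderIso.addRight (n : ℚ)) h x = h (x - n) + n := by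
    simp only [MulAut.conj_apply, RelIso.mul_apply, OrderIso.addRight_apply]
    change h ((OrderIso.addRight (n : ℚ)).symm x) + n = _
    rw [OrderIso.addRight_symm, OrderIso.addRight_apply, sub_eq_add_neg]
  have hsub : floorMod M x = floorMod M (x - n) + n := by
    rw [← floorMod_add_natCast, sub_add_cancel]
  rw [hconj, floorMod_add_natCast, hh]
  rintro h'
  exact hx (by rw [hsub, h'])

variable (hM : 2 ≤ M)
include hM

noncomputable def pingPongMap : ℚ ≃o ℚ :=
  periodizeIso (Nat.cast_pos.mpr (by omega : 0 < M)) (compressIso_zero (Nat.one_lt_cast.mpr hM))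
    (compressIso_self (Nat.one_lt_cast.mpr hM))

theorem floorMod_pingPongMap {x : ℚ} (hx : floorMod M x ≠ -1) :
    floorMod M (pingPongMap hM x) = 0 := by
  obtain ⟨n, s, hs, rfl⟩ := exists_zsmul_add_eq (Nat.cast_pos.mpr (by omega : 0 < M)) x
  rw [pingPongMap, periodizeIso_apply, periodize_zsmul_add _ _ _ hs, floorMod_zsmul_add,
    compressIso_apply]
  rw [floorMod_zsmul_add] at hx
  have hlt : s < M - 1 := lt_of_not_ge fun h => hx (floorMod_eq_neg_one hs h)
  have h1 : (0 : ℚ) < M - 1 := by linarith [(Nat.one_lt_cast (α := ℚ)).mpr hM]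
  rw [compress, if_pos hlt]
  have : ⌊s / (M - 1)⌋ = 0 :=
    Int.floor_eq_zero_iff.mpr ⟨div_nonneg hs.1 h1.le, (div_lt_one h1).mpr hlt⟩
  simp [floorMod, this]

theorem floorMod_pingPongMap_inv {x : ℚ} (hx : floorMod M x ≠ 0) :
    floorMod M ((pingPongMap hM)⁻¹ x) = -1 := by
  by_contra h
  exact hx (by simpa using floorMod_pingPongMap hM h)

end FloorMod

section PingPong

variable (k : ℕ)

-- The `i`-th generator moves the complement of the class `2i` of `⌊x⌋ mod 2(k + 2)` into the
-- class `2i + 1`, and its inverse moves the complement of the class `2i + 1` into the class `2i`.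
noncomputable def pingPongGen (i : Fin (k + 2)) : ℚ ≃o ℚ :=
  MulAut.conj (OrderIso.addRight ((2 * i + 1 : ℕ) : ℚ)) (pingPongMap (M := 2 * (k + 2)) (by omega))

theorem injective_lift_pingPongGen : Function.Injective (FreeGroup.lift (pingPongGen k)) := by
  set M := 2 * (k + 2)
  have hM : 2 ≤ M := by omega
  have hdisj : ∀ a b : ℕ, a < M → b < M → a ≠ b →
      Disjoint (floorMod M ⁻¹' {(a : ZMod M)}) (floorMod M ⁻¹' {(b : ZMod M)}) :=
    fun a b ha hb hab => disjoint_left.mpr fun x hxa hxb => hab <| by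
      have h : (a : ZMod M) = b := hxa.symm.trans hxb
      rwa [ZMod.natCast_eq_natCast_iff', Nat.mod_eq_of_lt ha, Nat.mod_eq_of_lt hb] at h
  have hgen (i : Fin (k + 2)) {x : ℚ} (hx : floorMod M x ≠ (2 * i : ℕ)) :
      floorMod M (pingPongGen k i x) = (2 * i + 1 : ℕ) := by
    have := floorMod_conj_addRight (fun _ => floorMod_pingPongMap hM)
      (2 * i + 1) (x := x)
      (by rwa [show (-1 : ZMod M) + ((2 * i + 1 : ℕ) : ZMod M) = (2 * i : ℕ) by push_cast; ring])
    rwa [zero_add] at this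
  have hgen_inv (i : Fin (k + 2)) {x : ℚ} (hx : floorMod M x ≠ (2 * i + 1 : ℕ)) :
      floorMod M ((pingPongGen k i)⁻¹ x) = (2 * i : ℕ) := by
    have := floorMod_conj_addRight (fun _ => floorMod_pingPongMap_inv hM)
      (2 * i + 1) (x := x) (by rwa [zero_add])
    rw [pingPongGen, ← map_inv]
    convert this using 1
    push_cast
    ring
  refine FreeGroup.injective_lift_of_ping_pong (pingPongGen k)
    (fun i => floorMod M ⁻¹' {((2 * i + 1 : ℕ) : ZMod M)})
    (fun i => floorMod M ⁻¹' {((2 * i : ℕ) : ZMod M)}) (fun i => ?_) (fun i j hij => ?_)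
    (fun i j hij => ?_) (fun i j => ?_) (fun i => ?_) (fun i => ?_)
  · exact ⟨((2 * i + 1 : ℕ) : ℚ), by
      simp only [mem_preimage, mem_singleton_iff, floorMod, Int.floor_natCast, Int.cast_natCast]⟩
  · exact hdisj _ _ (by omega) (by omega) (by have := Fin.val_ne_of_ne hij; omega)
  · exact hdisj _ _ (by omega) (by omega) (by have := Fin.val_ne_of_ne hij; omega)
  · exact hdisj _ _ (by omega) (by omega) (by omega)
  · exact smul_set_subset_iff.mpr fun x hx => hgen i hx
  · exact smul_set_subset_iff.mpr fun x hx => hgen_inv i hx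

end PingPong

-- The ping-pong lemma needs at least two generators, hence the detour through `F(k + 2)`.
theorem FreeGroup.exists_injective_orderIso_rat (α : Type*) [Finite α] :
    ∃ ρ : FreeGroup α →* (ℚ ≃o ℚ), Function.Injective ρ := by
  obtain ⟨k, ⟨e⟩⟩ := Finite.exists_equiv_fin α
  exact ⟨(FreeGroup.lift (pingPongGen k)).comp (FreeGroup.map (Fin.castAdd 2 ∘ e)),
    (injective_lift_pingPongGen k).comp
      (FreeGroup.map_injective ((Fin.castAdd_injective k 2).comp e.injective))⟩

theorem FreeGroup.exists_rightOrder (α : Type*) [Finite α] :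
    ∃ r : FreeGroup α → FreeGroup α → Prop,
      IsLinearOrder _ r ∧ ∀ a b c, r a b → r (a * c) (b * c) := by
  obtain ⟨ρ, hρ⟩ := FreeGroup.exists_injective_orderIso_rat α
  exact exists_rightOrder_of_injective_orderIso ρ hρ

/-! ### Values in ℓ-groups -/

section LatticeOrderedGroup

variable {L : Type*} [Group L] [Lattice L] [MulLeftMono L] [MulRightMono L]

theorem inf_mul_le_mul_inf {a b c : L} (ha : 1 ≤ a) (hb : 1 ≤ b) (hc : 1 ≤ c) :
    a ⊓ (b * c) ≤ (a ⊓ b) * (a ⊓ c) := by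
  rw [mul_inf, inf_mul, inf_mul]
  refine le_inf (le_inf ?_ ?_) (le_inf ?_ inf_le_right) <;> refine inf_le_left.trans ?_
  · exact le_mul_of_one_le_right' ha
  · exact le_mul_of_one_le_left' hb
  · exact le_mul_of_one_le_right' hc

theorem one_le_of_mem_closure_mabs {s : Set L} {x : L}
    (hx : x ∈ Submonoid.closure (mabs '' s)) : 1 ≤ x := by
  induction hx using Submonoid.closure_induction with
  | mem _ hy => obtain ⟨y, -, rfl⟩ := hy; exact one_le_mabs y
  | one => exact le_rfl
  | mul _ _ _ _ hy hz => exact one_le_mul hy hz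

theorem exists_inf_le_of_mem_closure_mabs {s t : Set L} {N : Submonoid L}
    (h : ∀ x ∈ s, ∀ y ∈ t, ∃ n ∈ N, |x|ₘ ⊓ |y|ₘ ≤ n) {P Q : L}
    (hP : P ∈ Submonoid.closure (mabs '' s)) (hQ : Q ∈ Submonoid.closure (mabs '' t)) :
    ∃ n ∈ N, P ⊓ Q ≤ n := by
  have key : ∀ {u : Set L} {a : L}, 1 ≤ a → (∀ y ∈ u, ∃ n ∈ N, a ⊓ |y|ₘ ≤ n) →
      ∀ Q ∈ Submonoid.closure (mabs '' u), ∃ n ∈ N, a ⊓ Q ≤ n := by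
    intro u a ha hu Q hQ
    induction hQ using Submonoid.closure_induction with
    | mem _ hy => obtain ⟨y, hy, rfl⟩ := hy; exact hu y hy
    | one => exact ⟨1, N.one_mem, inf_le_right⟩
    | mul y z hy hz ihy ihz =>
      obtain ⟨n₁, hn₁, h₁⟩ := ihy
      obtain ⟨n₂, hn₂, h₂⟩ := ihz
      exact ⟨n₁ * n₂, N.mul_mem hn₁ hn₂, (inf_mul_le_mul_inf ha (one_le_of_mem_closure_mabs hy)
        (one_le_of_mem_closure_mabs hz)).trans (mul_le_mul' h₁ h₂)⟩
  rw [inf_comm]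
  refine key (one_le_of_mem_closure_mabs hQ) (fun x hx => ?_) P hP
  rw [inf_comm]
  exact key (one_le_mabs x) (h x hx) Q hQ

namespace Subgroup

-- Solid subgroups are exactly the convex ℓ-subgroups.
def IsSolid (M : Subgroup L) : Prop := ∀ ⦃x y : L⦄, y ∈ M → |x|ₘ ≤ |y|ₘ → x ∈ M

omit [MulRightMono L] in
theorem isSolid_bot : (⊥ : Subgroup L).IsSolid := by
  intro x y hy hxy
  rw [mem_bot] at hy ⊢
  rw [hy, mabs_one] at hxy
  exact le_antisymm ((le_mabs_self x).trans hxy) (inv_le_one'.mp ((inv_le_mabs x).trans hxy))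

theorem IsSolid.mabs_mem {M : Subgroup L} (hM : M.IsSolid) {x : L} (hx : x ∈ M) : |x|ₘ ∈ M :=
  hM hx (mabs_mabs x).le

def solidSup (M : Subgroup L) (u : L) : Subgroup L where
  carrier := {x | ∃ P ∈ Submonoid.closure (mabs '' insert u (M : Set L)), |x|ₘ ≤ P}
  one_mem' := ⟨1, Submonoid.one_mem _, mabs_one.le⟩
  mul_mem' := by
    rintro x y ⟨P, hP, hx⟩ ⟨Q, hQ, hy⟩
    have hP1 := one_le_of_mem_closure_mabs hP
    refine ⟨P * Q * P, Submonoid.mul_mem _ (Submonoid.mul_mem _ hP hQ) hP, mabs_le'.mpr ⟨?_, ?_⟩⟩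
    · calc x * y ≤ P * Q := mul_le_mul' ((le_mabs_self x).trans hx) ((le_mabs_self y).trans hy)
        _ ≤ P * Q * P := le_mul_of_one_le_right' hP1
    · calc (x * y)⁻¹ = y⁻¹ * x⁻¹ := mul_inv_rev x y
        _ ≤ Q * P := mul_le_mul' ((inv_le_mabs y).trans hy) ((inv_le_mabs x).trans hx)
        _ ≤ P * (Q * P) := le_mul_of_one_le_left' hP1
        _ = P * Q * P := (mul_assoc P Q P).symm
  inv_mem' := by
    rintro x ⟨P, hP, hx⟩
    exact ⟨P, hP, by rwa [mabs_inv]⟩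

variable {M : Subgroup L} {u : L}

theorem isSolid_solidSup : (M.solidSup u).IsSolid :=
  fun _ _ ⟨P, hP, hy⟩ hxy => ⟨P, hP, hxy.trans hy⟩

theorem le_solidSup : M ≤ M.solidSup u :=
  fun x hx => ⟨|x|ₘ, Submonoid.subset_closure ⟨x, mem_insert_of_mem u hx, rfl⟩, le_rfl⟩

theorem mem_solidSup_self : u ∈ M.solidSup u :=
  ⟨|u|ₘ, Submonoid.subset_closure ⟨u, mem_insert u _, rfl⟩, le_rfl⟩

def IsValue (M : Subgroup L) (a : L) : Prop :=
  Maximal (fun N : Subgroup L => N.IsSolid ∧ a ∉ N) M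

omit [MulRightMono L] in
theorem exists_isValue {a : L} (ha : a ≠ 1) : ∃ M : Subgroup L, M.IsValue a := by
  have hchain : ∀ c ⊆ {N : Subgroup L | N.IsSolid ∧ a ∉ N}, IsChain (· ≤ ·) c →
      ∀ N ∈ c, ∃ K ∈ {N : Subgroup L | N.IsSolid ∧ a ∉ N}, ∀ N ∈ c, N ≤ K := by
    intro c hc hchain N hN
    have hmem : ∀ {x : L}, x ∈ sSup c ↔ ∃ K ∈ c, x ∈ K :=
      mem_sSup_of_directedOn ⟨N, hN⟩ hchain.directedOn
    refine ⟨sSup c, ⟨fun x y hy hxy => ?_, fun ha' => ?_⟩, fun K hK => le_sSup hK⟩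
    · obtain ⟨K, hK, hyK⟩ := hmem.mp hy
      exact hmem.mpr ⟨K, hK, (hc hK).1 hyK hxy⟩
    · obtain ⟨K, hK, haK⟩ := hmem.mp ha'
      exact (hc hK).2 haK
  obtain ⟨M, -, hM⟩ := zorn_le_nonempty₀ _ hchain ⊥ ⟨isSolid_bot, by rwa [mem_bot]⟩
  exact ⟨M, hM⟩

variable {a : L}

theorem IsValue.mem_solidSup (hM : M.IsValue a) (hu : u ∉ M) : a ∈ M.solidSup u := by
  by_contra ha
  exact hu (hM.le_of_ge ⟨isSolid_solidSup, ha⟩ le_solidSup mem_solidSup_self)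

-- `a` lies below a product from `M ∪ {u}` and below one from `M ∪ {v}`; as `u ⊓ v = 1`, it lies
-- below the infimum of the two, which is bounded by an element of `M`.
theorem IsValue.mem_or_mem (hM : M.IsValue a) {u v : L} (hu : 1 ≤ u) (hv : 1 ≤ v)
    (huv : u ⊓ v = 1) : u ∈ M ∨ v ∈ M := by
  by_contra! h
  obtain ⟨P, hP, haP⟩ := hM.mem_solidSup h.1
  obtain ⟨Q, hQ, haQ⟩ := hM.mem_solidSup h.2
  have hgen : ∀ x ∈ insert u (M : Set L), ∀ y ∈ insert v (M : Set L),
      ∃ n ∈ M.toSubmonoid, |x|ₘ ⊓ |y|ₘ ≤ n := by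
    rintro x (rfl | hx) y (rfl | hy)
    · exact ⟨1, M.one_mem, by rw [mabs_of_one_le hu, mabs_of_one_le hv, huv]⟩
    · exact ⟨|y|ₘ, hM.prop.1.mabs_mem hy, inf_le_right⟩
    · exact ⟨|x|ₘ, hM.prop.1.mabs_mem hx, inf_le_left⟩
    · exact ⟨|x|ₘ, hM.prop.1.mabs_mem hx, inf_le_left⟩
  obtain ⟨n, hn, hPQ⟩ := exists_inf_le_of_mem_closure_mabs hgen hP hQ
  exact hM.prop.2 (hM.prop.1 hn ((le_inf haP haQ).trans (hPQ.trans (le_mabs_self n))))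

theorem IsValue.oneLePart_mem_or_leOnePart_mem (hM : M.IsValue a) (x : L) :
    x⁺ᵐ ∈ M ∨ x⁻ᵐ ∈ M :=
  hM.mem_or_mem (one_le_oneLePart x) (one_le_leOnePart x) (oneLePart_inf_leOnePart_eq_one x)

def RightCosetLE (M : Subgroup L) (x y : L) : Prop := ∃ c ∈ M, x ≤ c * y

omit [MulRightMono L] in
theorem rightCosetLE_trans {x y z : L} (hxy : M.RightCosetLE x y) (hyz : M.RightCosetLE y z) :
    M.RightCosetLE x z := by
  obtain ⟨c, hc, hxy⟩ := hxy
  obtain ⟨d, hd, hyz⟩ := hyz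
  exact ⟨c * d, M.mul_mem hc hd,
    hxy.trans ((mul_le_mul_right hyz c).trans_eq (mul_assoc c d z).symm)⟩

omit [MulLeftMono L] in
theorem rightCosetLE_mul_right {x y : L} (z : L) (h : M.RightCosetLE x y) :
    M.RightCosetLE (x * z) (y * z) := by
  obtain ⟨c, hc, hxy⟩ := h
  exact ⟨c, hc, (mul_le_mul_left hxy z).trans_eq (mul_assoc c y z)⟩

theorem IsValue.rightCosetLE_total (hM : M.IsValue a) (x y : L) :
    M.RightCosetLE x y ∨ M.RightCosetLE y x := by
  rcases hM.oneLePart_mem_or_leOnePart_mem (x * y⁻¹) with h | h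
  · exact Or.inl ⟨_, h, by simpa using mul_le_mul_left (le_oneLePart (x * y⁻¹)) y⟩
  · exact Or.inr ⟨_, h, by simpa using mul_le_mul_left (inv_le_leOnePart (x * y⁻¹)) x⟩

end Subgroup

theorem exists_isValue_not_rightCosetLE {ι : Type*} {s : Finset ι} (hs : s.Nonempty) (x : ι → L)
    (h : ¬ 1 ≤ s.sup' hs x) :
    ∃ (M : Subgroup L) (a : L), M.IsValue a ∧ ∀ i ∈ s, ¬ M.RightCosetLE 1 (x i) := by
  have ha : (s.sup' hs x)⁻¹ ⊔ 1 ≠ 1 := fun h' => h (inv_le_one'.mp (le_sup_left.trans h'.le))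
  obtain ⟨M, hM⟩ := Subgroup.exists_isValue ha
  refine ⟨M, _, hM, fun i hi ⟨c, hc, hle⟩ => hM.prop.2 (hM.prop.1 hc ?_)⟩
  have hxc : (x i)⁻¹ ≤ c := by simpa using mul_le_mul_left hle (x i)⁻¹
  rw [mabs_of_one_le le_sup_right]
  exact sup_le ((inv_le_inv_iff.mpr (Finset.le_sup' x hi)).trans (hxc.trans (le_mabs_self c)))
    (one_le_mabs c)

end LatticeOrderedGroup

/-! ### Lexicographic refinement of a total preorder -/

section LexRefine

variable {α : Type*} {P r : α → α → Prop}

def lexRefine (P r : α → α → Prop) (a b : α) : Prop := P a b ∧ (P b a → r a b)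

theorem isLinearOrder_lexRefine (hPtrans : ∀ a b c, P a b → P b c → P a c)
    (hPtotal : ∀ a b, P a b ∨ P b a) [IsLinearOrder α r] : IsLinearOrder α (lexRefine P r) where
  refl a := ⟨(hPtotal a a).elim id id, fun _ => refl_of r a⟩
  trans a b c hab hbc := ⟨hPtrans a b c hab.1 hbc.1, fun hca =>
    trans_of r (hab.2 (hPtrans b c a hbc.1 hca)) (hbc.2 (hPtrans c a b hca hab.1))⟩
  antisymm a b hab hba := antisymm_of r (hab.2 hba.1) (hba.2 hab.1)
  total a b := by
    by_cases hab : P a b <;> by_cases hba : P b a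
    · exact (total_of r a b).imp (fun h => ⟨hab, fun _ => h⟩) (fun h => ⟨hba, fun _ => h⟩)
    · exact Or.inl ⟨hab, fun h => absurd h hba⟩
    · exact Or.inr ⟨hba, fun h => absurd h hab⟩
    · exact absurd (hPtotal a b) (by tauto)

theorem lexRefine_of_not (hPtotal : ∀ a b, P a b ∨ P b a) {a b : α} (h : ¬ P b a) :
    lexRefine P r a b :=
  ⟨(hPtotal a b).resolve_right h, fun h' => absurd h' h⟩

theorem lexRefine_mul_right {G : Type*} [Group G] {P r : G → G → Prop}
    (hP : ∀ a b c, P a b → P (a * c) (b * c)) (hr : ∀ a b c, r a b → r (a * c) (b * c))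
    {a b : G} (c : G) (h : lexRefine P r a b) : lexRefine P r (a * c) (b * c) :=
  ⟨hP a b c h.1, fun hba => hr a b c (h.2 (by simpa using hP _ _ c⁻¹ hba))⟩

end LexRefine

theorem exists_rightOrder_of_not_one_le_sup' {G L ι : Type*} [Group G] [Group L] [Lattice L]
    [MulLeftMono L] [MulRightMono L] {r₀ : G → G → Prop} [IsLinearOrder G r₀]
    (hr₀ : ∀ a b c, r₀ a b → r₀ (a * c) (b * c)) {s : Finset ι} (hs : s.Nonempty) (t : ι → G)
    (φ : G →* L) (h : ¬ 1 ≤ s.sup' hs fun i => φ (t i)) :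
    ∃ r : G → G → Prop, IsLinearOrder G r ∧ (∀ a b c, r a b → r (a * c) (b * c)) ∧
      ∀ i ∈ s, r 1 (t i) ∧ t i ≠ 1 := by
  obtain ⟨M, _, hM, hlow⟩ := exists_isValue_not_rightCosetLE hs _ h
  let P : G → G → Prop := fun g g' => M.RightCosetLE (φ g') (φ g)
  have hPtrans : ∀ a b c, P a b → P b c → P a c := fun _ _ _ hab hbc =>
    Subgroup.rightCosetLE_trans hbc hab
  have hPtotal : ∀ a b, P a b ∨ P b a := fun a b => hM.rightCosetLE_total (φ b) (φ a)
  have hPmul : ∀ a b c, P a b → P (a * c) (b * c) := fun a b c hab => by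
    simpa only [P, map_mul] using Subgroup.rightCosetLE_mul_right (φ c) hab
  refine ⟨lexRefine P r₀, isLinearOrder_lexRefine hPtrans hPtotal,
    fun a b c => lexRefine_mul_right hPmul hr₀ c, fun i hi => ⟨?_, fun hti => ?_⟩⟩
  · exact lexRefine_of_not hPtotal (by simpa [P] using hlow i hi)
  · exact hlow i hi (by rw [hti, map_one]; exact ⟨1, M.one_mem, (one_mul 1).ge⟩)

/-- `e ≤ t₁ ∨ … ∨ tₙ` holds in all ℓ-groups iff `{t i}` does not extend to a
right order of the free group `F(k)`. -/
theorem lgroup_validity_iff_not_right_orderable (k n : ℕ) (hn : 0 < n)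
    (t : Fin n → FreeGroup (Fin k)) :
    (∀ (L : Type) (_ : Group L) (_ : Lattice L)
        (_ : CovariantClass L L (· * ·) (· ≤ ·))
        (_ : CovariantClass L L (Function.swap (· * ·)) (· ≤ ·))
        (φ : FreeGroup (Fin k) →* L),
        (1 : L) ≤ Finset.univ.sup' (Finset.univ_nonempty_iff.mpr ⟨⟨0, hn⟩⟩)
          (fun i => φ (t i))) ↔
      ¬ (∃ r : FreeGroup (Fin k) → FreeGroup (Fin k) → Prop,
          IsLinearOrder _ r ∧
          (∀ a b c, r a b → r (a * c) (b * c)) ∧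
          (∀ i, r 1 (t i) ∧ t i ≠ 1)) := by
  constructor
  · rintro hvalid ⟨r, hr, hmul, hpos⟩
    let := linearOrderOfIsLinearOrder r
    have : MulRightMono (FreeGroup (Fin k)) := ⟨fun c a b h => hmul a b c h⟩
    exact not_one_le_sup'_mulRightInvHom _ (fun i _ => lt_of_le_of_ne (hpos i).1 (hpos i).2.symm)
      (hvalid _ inferInstance inferInstance inferInstance inferInstance OrderIso.mulRightInvHom)
  · rintro hnot L _ _ _ _ φ
    by_contra h
    obtain ⟨r₀, _, hr₀⟩ := FreeGroup.exists_rightOrder (Fin k)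
    obtain ⟨r, hr, hmul, hpos⟩ := exists_rightOrder_of_not_one_le_sup' hr₀ _ t φ h
    exact hnot ⟨r, hr, hmul, fun i => hpos i (Finset.mem_univ i)⟩
end

section
/- Every finitely generated free group admits a total order invariant under multiplication on both sides (i.e., finitely generated free groups are bi-orderable). -/
/-!
The Magnus map `μ : xᵢ ↦ 1 + Xᵢ` sends the free group on `α` into the units of the ring
`ℤ⟨⟨Xᵢ⟩⟩` of noncommutative power series. It is injective: a reduced word
`x_{i₁}^{n₁} ⋯ x_{iₘ}^{nₘ}` (adjacent letters distinct, exponents nonzero) has coefficient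
`n₁ ⋯ nₘ ≠ 0` at the monomial `X_{i₁} ⋯ X_{iₘ}`, because each factor `(1 + Xᵢ)ⁿ` only involves
powers of `Xᵢ`.

Order power series by the sign of the coefficient of the shortlex-least monomial of their
support. This is a translation-invariant total order on the additive group, and multiplying on
either side by a series with constant term `1` does not change that lowest coefficient. Every
Magnus image has constant term `1` and `μ(c b d) - μ(c a d) = μ(c) (μ(b) - μ(a)) μ(d)`, so pulling
the order back along `μ` gives a bi-invariant order on the free group.
-/

open Finset

theorem List.IsChain.length_le_one_of_forall_eq {α : Type*} {l : List α}
    (hl : l.IsChain (· ≠ ·)) {i : α} (h : ∀ a ∈ l, a = i) : l.length ≤ 1 := by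
  match l, hl with
  | [], _ | [_], _ => simp
  | a :: b :: _, hl =>
    exact absurd ((h a (by simp)).trans (h b (by simp)).symm) (List.isChain_cons_cons.mp hl).1

def NCPowerSeries (α R : Type*) : Type _ := List α → R

namespace NCPowerSeries

variable {α R : Type*}

@[ext]
theorem ext {f g : NCPowerSeries α R} (h : ∀ w, f w = g w) : f = g := funext h

variable [Ring R]

instance : AddCommGroup (NCPowerSeries α R) := inferInstanceAs (AddCommGroup (List α → R))

instance : One (NCPowerSeries α R) := ⟨fun w => if w = [] then 1 else 0⟩

instance : Mul (NCPowerSeries α R) :=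
  ⟨fun f g w => ∑ j ∈ range (w.length + 1), f (w.take j) * g (w.drop j)⟩

theorem one_apply (w : List α) : (1 : NCPowerSeries α R) w = if w = [] then 1 else 0 := rfl

theorem mul_apply (f g : NCPowerSeries α R) (w : List α) :
    (f * g) w = ∑ j ∈ range (w.length + 1), f (w.take j) * g (w.drop j) := rfl

@[simp] theorem zero_apply (w : List α) : (0 : NCPowerSeries α R) w = 0 := rfl
@[simp] theorem add_apply (f g : NCPowerSeries α R) (w : List α) : (f + g) w = f w + g w := rfl
@[simp] theorem neg_apply (f : NCPowerSeries α R) (w : List α) : (-f) w = -f w := rfl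

@[simp] theorem one_apply_nil : (1 : NCPowerSeries α R) [] = 1 := rfl
@[simp] theorem one_apply_cons (a : α) (w : List α) : (1 : NCPowerSeries α R) (a :: w) = 0 := rfl

protected theorem one_mul (f : NCPowerSeries α R) : 1 * f = f := by
  ext w
  rw [mul_apply, sum_eq_single_of_mem 0 (by simp)]
  · simp [one_apply]
  · intro j hj hj0
    have : w.take j ≠ [] := by
      rw [Ne, List.take_eq_nil_iff]
      rintro (h | rfl) <;> simp_all
    simp [one_apply, this]

protected theorem mul_one (f : NCPowerSeries α R) : f * 1 = f := by
  ext w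
  rw [mul_apply, sum_eq_single_of_mem w.length (by simp)]
  · simp [one_apply]
  · intro j hj hjw
    have : w.drop j ≠ [] := by
      rw [Ne, List.drop_eq_nil_iff]
      simp only [mem_range] at hj
      omega
    simp [one_apply, this]

protected theorem mul_assoc (f g h : NCPowerSeries α R) : f * g * h = f * (g * h) := by
  ext w
  set n := w.length
  calc (f * g * h) w
      = ∑ j ∈ Ico 0 (n + 1), ∑ i ∈ Ico 0 (j + 1),
          f (w.take i) * g ((w.drop i).take (j - i)) * h (w.drop j) := by
        rw [mul_apply, range_eq_Ico]
        refine sum_congr rfl fun j hj => ?_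
        simp only [mem_Ico] at hj
        rw [mul_apply, List.length_take, min_eq_left (by omega), sum_mul, range_eq_Ico]
        refine sum_congr rfl fun i hi => ?_
        simp only [mem_Ico] at hi
        rw [List.take_take, List.drop_take, min_eq_left (by omega)]
    _ = ∑ i ∈ Ico 0 (n + 1), ∑ j ∈ Ico i (n + 1),
          f (w.take i) * g ((w.drop i).take (j - i)) * h (w.drop j) :=
        (sum_Ico_Ico_comm _ _ _).symm
    _ = (f * (g * h)) w := by
        rw [mul_apply, range_eq_Ico]
        refine sum_congr rfl fun i hi => ?_
        simp only [mem_Ico] at hi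
        rw [mul_apply, mul_sum, List.length_drop, sum_Ico_eq_sum_range,
          show n + 1 - i = n - i + 1 by omega]
        refine sum_congr rfl fun t _ => ?_
        rw [List.drop_drop, Nat.add_sub_cancel_left, Nat.add_comm, mul_assoc]

instance : Ring (NCPowerSeries α R) where
  mul_assoc := NCPowerSeries.mul_assoc
  one_mul := NCPowerSeries.one_mul
  mul_one := NCPowerSeries.mul_one
  left_distrib f g h := by ext w; simp [mul_apply, mul_add, sum_add_distrib]
  right_distrib f g h := by ext w; simp [mul_apply, add_mul, sum_add_distrib]
  zero_mul f := by ext w; simp [mul_apply]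
  mul_zero f := by ext w; simp [mul_apply]

@[simp] theorem mul_apply_nil (f g : NCPowerSeries α R) : (f * g) [] = f [] * g [] := by
  simp [mul_apply]

theorem mul_apply_singleton (f g : NCPowerSeries α R) (a : α) :
    (f * g) [a] = f [] * g [a] + f [a] * g [] := by
  simp [mul_apply, sum_range_succ]

theorem mul_apply_of_forall_length_lt_left {n : ℕ} {e x : NCPowerSeries α R}
    (he : ∀ v : List α, v.length < n → e v = 0) (hx : x [] = 1) {w : List α}
    (hw : w.length ≤ n) : (x * e) w = e w := by
  rw [mul_apply, sum_eq_single_of_mem 0 (by simp)]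
  · simp [hx]
  · intro j hj hj0
    rw [he _ (by simp only [mem_range] at hj; simp only [List.length_drop]; omega), mul_zero]

theorem mul_apply_of_forall_length_lt_right {n : ℕ} {e y : NCPowerSeries α R}
    (he : ∀ v : List α, v.length < n → e v = 0) (hy : y [] = 1) {w : List α}
    (hw : w.length ≤ n) : (e * y) w = e w := by
  rw [mul_apply, sum_eq_single_of_mem w.length (by simp)]
  · simp [hy]
  · intro j hj hjw
    rw [he _ (by simp only [mem_range] at hj; simp only [List.length_take]; omega), zero_mul]

def IsSupportedOnLetter (i : α) (f : NCPowerSeries α R) : Prop :=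
  ∀ w, f w ≠ 0 → ∀ a ∈ w, a = i

theorem IsSupportedOnLetter.apply_eq_zero {i a : α} {f : NCPowerSeries α R}
    (hf : IsSupportedOnLetter i f) {w : List α} (ha : a ∈ w) (hai : a ≠ i) : f w = 0 :=
  by_contra fun h => hai (hf w h a ha)

theorem exists_apply_ne_zero_of_mul_apply_ne_zero {f g : NCPowerSeries α R} {w : List α}
    (h : (f * g) w ≠ 0) : ∃ j, f (w.take j) ≠ 0 ∧ g (w.drop j) ≠ 0 := by
  obtain ⟨j, -, hj⟩ := exists_ne_zero_of_sum_ne_zero h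
  exact ⟨j, ne_zero_and_ne_zero_of_mul hj⟩

theorem isSupportedOnLetter_one (i : α) : IsSupportedOnLetter i (1 : NCPowerSeries α R) := by
  rintro (_ | _) h <;> simp_all

theorem IsSupportedOnLetter.mul {i : α} {f g : NCPowerSeries α R} (hf : IsSupportedOnLetter i f)
    (hg : IsSupportedOnLetter i g) : IsSupportedOnLetter i (f * g) := by
  intro w h a ha
  obtain ⟨j, hfj, hgj⟩ := exists_apply_ne_zero_of_mul_apply_ne_zero h
  rw [← List.take_append_drop j w, List.mem_append] at ha
  exact ha.elim (hf _ hfj a) (hg _ hgj a)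

theorem mul_apply_cons_of_isSupportedOnLetter {i : α} {f : NCPowerSeries α R}
    (hf : IsSupportedOnLetter i f) (g : NCPowerSeries α R) {u : List α}
    (hu : ∀ a ∈ u.head?, a ≠ i) : (f * g) (i :: u) = f [] * g (i :: u) + f [i] * g u := by
  have hrest :
      ∑ j ∈ range u.length, f ((i :: u).take (j + 2)) * g ((i :: u).drop (j + 2)) = 0 := by
    rcases u with _ | ⟨b, u⟩
    · simp
    · refine sum_eq_zero fun j _ => ?_
      rw [hf.apply_eq_zero (a := b) (by simp) (hu b rfl), zero_mul]
  rw [mul_apply, List.length_cons, sum_range_succ', sum_range_succ', hrest]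
  simp [add_comm]

theorem prod_apply_eq_zero_of_length_lt (L : List (α × NCPowerSeries α R))
    (hL : ∀ p ∈ L, IsSupportedOnLetter p.1 p.2) {w : List α} (hw : w.IsChain (· ≠ ·))
    (hlen : L.length < w.length) : (L.map Prod.snd).prod w = 0 := by
  induction L generalizing w with
  | nil =>
    obtain ⟨a, w, rfl⟩ := List.exists_cons_of_length_pos hlen
    simp
  | cons p L ih =>
    by_contra h
    rw [List.map_cons, List.prod_cons] at h
    obtain ⟨j, hp, hL'⟩ := exists_apply_ne_zero_of_mul_apply_ne_zero h
    have hj := (hw.take j).length_le_one_of_forall_eq (hL p List.mem_cons_self _ hp)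
    refine hL' (ih (fun q hq => hL q (List.mem_cons_of_mem _ hq)) (hw.drop j) ?_)
    simp only [List.length_take, List.length_drop, List.length_cons] at hj hlen ⊢
    omega

theorem prod_apply_map_fst (L : List (α × NCPowerSeries α R))
    (hL : ∀ p ∈ L, IsSupportedOnLetter p.1 p.2 ∧ p.2 [] = 1)
    (hchain : (L.map Prod.fst).IsChain (· ≠ ·)) :
    (L.map Prod.snd).prod (L.map Prod.fst) = (L.map fun p => p.2 [p.1]).prod := by
  induction L with
  | nil => simp
  | cons p L ih =>
    have hL' : ∀ q ∈ L, IsSupportedOnLetter q.1 q.2 ∧ q.2 [] = 1 :=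
      fun q hq => hL q (List.mem_cons_of_mem _ hq)
    obtain ⟨hsupp, hnil⟩ := hL p List.mem_cons_self
    rw [List.map_cons, List.isChain_cons] at hchain
    simp only [List.map_cons, List.prod_cons]
    rw [mul_apply_cons_of_isSupportedOnLetter hsupp _ fun a ha => (hchain.1 a ha).symm, hnil,
      prod_apply_eq_zero_of_length_lt L (fun q hq => (hL' q hq).1) (List.isChain_cons.mpr hchain)
        (by simp), ih hL' hchain.2]
    simp

section Generators

variable [DecidableEq α]

def X (i : α) : NCPowerSeries α R := fun w => if w = [i] then 1 else 0

@[simp] theorem X_apply_nil (i : α) : (X i : NCPowerSeries α R) [] = 0 := rfl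

theorem X_mul_apply_cons (i a : α) (f : NCPowerSeries α R) (w : List α) :
    (X i * f : NCPowerSeries α R) (a :: w) = if a = i then f w else 0 := by
  rw [mul_apply, sum_eq_single_of_mem 1 (by simp)]
  · by_cases h : a = i <;> simp [X, h]
  · intro j hj hj1
    have : (a :: w).take j ≠ [i] := fun h => by
      have := congrArg List.length h
      simp only [mem_range, List.length_take, List.length_cons, List.length_nil] at hj this
      omega
    simp [X, this]

theorem mul_X_apply_concat (f : NCPowerSeries α R) (i a : α) (w : List α) :
    (f * X i : NCPowerSeries α R) (w ++ [a]) = if a = i then f w else 0 := by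
  rw [mul_apply, sum_eq_single_of_mem w.length (by simp)]
  · by_cases h : a = i <;> simp [X, h]
  · intro j hj hjw
    have : (w ++ [a]).drop j ≠ [i] := fun h => by
      have := congrArg List.length h
      simp only [mem_range, List.length_drop, List.length_append, List.length_singleton] at hj this
      omega
    simp [X, this]

def oneAddXInv (i : α) : NCPowerSeries α R :=
  fun w => if ∀ a ∈ w, a = i then (-1) ^ w.length else 0

@[simp] theorem oneAddXInv_apply_nil (i : α) : (oneAddXInv i : NCPowerSeries α R) [] = 1 := by
  simp [oneAddXInv]

theorem oneAddXInv_apply_cons (i a : α) (w : List α) :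
    (oneAddXInv i : NCPowerSeries α R) (a :: w) = if a = i then -oneAddXInv i w else 0 := by
  simp only [oneAddXInv, List.forall_mem_cons, List.length_cons, pow_succ]
  by_cases hw : ∀ b ∈ w, b = i
  · by_cases h : a = i <;> simp [h, if_pos hw]
  · simp [hw]

theorem oneAddXInv_apply_concat (i a : α) (w : List α) :
    (oneAddXInv i : NCPowerSeries α R) (w ++ [a]) = if a = i then -oneAddXInv i w else 0 := by
  simp only [oneAddXInv, List.forall_mem_append, List.forall_mem_singleton, List.length_append,
    List.length_singleton, pow_succ]
  by_cases hw : ∀ b ∈ w, b = i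
  · by_cases h : a = i <;> simp [h, if_pos hw]
  · simp [hw]

def oneAddX (i : α) : (NCPowerSeries α R)ˣ where
  val := 1 + X i
  inv := oneAddXInv i
  val_inv := by
    ext w
    rw [add_mul, one_mul, add_apply]
    rcases w with _ | ⟨a, w⟩
    · simp
    · by_cases h : a = i <;> simp [X_mul_apply_cons, oneAddXInv_apply_cons, h]
  inv_val := by
    ext w
    rw [mul_add, mul_one, add_apply]
    rcases w.eq_nil_or_concat with rfl | ⟨w, a, rfl⟩
    · simp [mul_apply, X]
    · by_cases h : a = i <;> simp [mul_X_apply_concat, oneAddXInv_apply_concat, h, one_apply]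

theorem isSupportedOnLetter_oneAddX (i : α) :
    IsSupportedOnLetter i ((oneAddX i : (NCPowerSeries α R)ˣ) : NCPowerSeries α R) := by
  rintro (_ | ⟨b, w⟩) h a ha
  · simp at ha
  · by_cases hw : b :: w = [i]
    · simp_all
    · simp [oneAddX, X, hw] at h

theorem isSupportedOnLetter_oneAddX_inv (i : α) :
    IsSupportedOnLetter i (↑(oneAddX i : (NCPowerSeries α R)ˣ)⁻¹ : NCPowerSeries α R) := by
  intro w h
  by_contra hw
  simp [oneAddX, oneAddXInv, hw] at h

end Generators

end NCPowerSeries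

namespace FreeGroup

open NCPowerSeries

variable {α R : Type*} [DecidableEq α] [Ring R]

variable (α R) in
def magnus : FreeGroup α →* (NCPowerSeries α R)ˣ := lift oneAddX

theorem magnus_apply_nil (g : FreeGroup α) : (magnus α R g : NCPowerSeries α R) [] = 1 := by
  induction g using FreeGroup.induction_on with
  | C1 => simp
  | of i => simp [magnus, oneAddX, lift_apply_of]
  | inv_of i _ => simp [magnus, oneAddX, lift_apply_of]
  | mul g h hg hh => simp [hg, hh]

theorem isSupportedOnLetter_magnus_of_zpow (i : α) (n : ℤ) :
    IsSupportedOnLetter i (magnus α R (of i ^ n) : NCPowerSeries α R) := by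
  rw [_root_.map_zpow, magnus, lift_apply_of]
  refine zpow_induction_right (P := fun u : (NCPowerSeries α R)ˣ => IsSupportedOnLetter i u.val)
    (isSupportedOnLetter_one i) (fun u hu => ?_) (fun u hu => ?_) n
  · exact hu.mul (isSupportedOnLetter_oneAddX i)
  · exact hu.mul (isSupportedOnLetter_oneAddX_inv i)

theorem magnus_of_zpow_apply_singleton (i : α) (n : ℤ) :
    (magnus α R (of i ^ n) : NCPowerSeries α R) [i] = n := by
  induction n using Int.induction_on with
  | zero => simp
  | succ n ih =>
    rw [zpow_add_one, _root_.map_mul, Units.val_mul, mul_apply_singleton, ih, magnus_apply_nil,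
      magnus_apply_nil]
    simp [magnus, oneAddX, X, add_comm]
  | pred n ih =>
    rw [zpow_sub_one, _root_.map_mul, Units.val_mul, mul_apply_singleton, ih, magnus_apply_nil,
      magnus_apply_nil]
    simp [magnus, oneAddX, oneAddXInv, sub_eq_add_neg, add_comm]

/- Mathlib's normal form for the free product of copies of `FreeGroup Unit` (`CoprodI.Word`)
is the decomposition of a reduced word into syllables `xᵢⁿ`. -/
theorem magnus_wordProd_apply_ne_zero [NoZeroDivisors R] [CharZero R]
    (w : Monoid.CoprodI.Word fun _ : α => FreeGroup Unit) :
    (magnus α R (freeGroupEquivCoprodI.symm w.prod) : NCPowerSeries α R)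
      (w.toList.map Sigma.fst) ≠ 0 := by
  obtain ⟨e, he⟩ : ∃ e : (Σ _ : α, FreeGroup Unit) → ℤ, ∀ l, l.2 = of () ^ e l :=
    ⟨fun l => freeGroupUnitEquivInt l.2,
      fun l => (freeGroupUnitEquivInt.symm_apply_apply l.2).symm⟩
  set L := w.toList.map fun l => (l.1, (magnus α R (of l.1 ^ e l) : NCPowerSeries α R))
  have hprod : (magnus α R (freeGroupEquivCoprodI.symm w.prod) : NCPowerSeries α R) =
      (L.map Prod.snd).prod := by
    rw [Monoid.CoprodI.Word.prod, map_list_prod, map_list_prod, ← Units.coeHom_apply,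
      map_list_prod]
    simp [L, Function.comp_def, he]
  have hfst : w.toList.map Sigma.fst = L.map Prod.fst := by simp [L]
  rw [hprod, hfst, prod_apply_map_fst L ?_ (by simpa [L, List.isChain_map] using w.chain_ne)]
  · refine List.prod_ne_zero ?_
    simp only [L, List.map_map, List.mem_map, Function.comp_apply, magnus_of_zpow_apply_singleton,
      not_exists, not_and]
    intro l hl hzero
    exact w.ne_one l hl (by rw [he l, Int.cast_eq_zero.mp hzero, zpow_zero])
  · simp only [L, List.mem_map]
    rintro _ ⟨l, -, rfl⟩
    exact ⟨isSupportedOnLetter_magnus_of_zpow l.1 (e l), magnus_apply_nil _⟩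

theorem magnus_injective [NoZeroDivisors R] [CharZero R] : Function.Injective (magnus α R) := by
  classical
  refine (injective_iff_map_eq_one _).mpr fun g hg => ?_
  set w := Monoid.CoprodI.Word.equiv (freeGroupEquivCoprodI g)
  have hw : freeGroupEquivCoprodI.symm w.prod = g :=
    (MulEquiv.symm_apply_eq _).mpr (Monoid.CoprodI.Word.equiv.symm_apply_apply _)
  by_contra hg1
  have hne : w.toList.map Sigma.fst ≠ [] := by
    intro h
    apply hg1
    rw [← hw, show w = Monoid.CoprodI.Word.empty from Monoid.CoprodI.Word.ext (by simpa using h)]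
    simp
  apply magnus_wordProd_apply_ne_zero (R := R) w
  rw [hw, hg, Units.val_one, one_apply, if_neg hne]

end FreeGroup

section Shortlex

variable {α : Type*}

def List.shortlexKey (w : List α) : ℕ ×ₗ List α := toLex (w.length, w)

theorem List.shortlexKey_injective : Function.Injective (List.shortlexKey (α := α)) :=
  fun _ _ h => congrArg Prod.snd (toLex.injective h)

variable [LT α]

theorem List.shortlexKey_lt_of_length_lt {v w : List α} (h : v.length < w.length) :
    v.shortlexKey < w.shortlexKey :=
  Prod.Lex.toLex_lt_toLex.mpr (Or.inl h)

theorem List.length_le_of_shortlexKey_lt {v w : List α} (h : v.shortlexKey < w.shortlexKey) :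
    v.length ≤ w.length := by
  rcases Prod.Lex.toLex_lt_toLex.mp h with h | ⟨h, -⟩ <;> simp_all [le_of_lt]

theorem List.wellFounded_shortlexKey_lt [WellFoundedLT α] :
    WellFounded fun v w : List α => v.shortlexKey < w.shortlexKey := by
  refine Subrelation.wf (fun {v w} h => ?_) (List.Shortlex.wf (r := (· < ·)) wellFounded_lt)
  rw [List.shortlex_def, ← List.lt_iff_lex_lt]
  exact Prod.Lex.toLex_lt_toLex.mp h

end Shortlex

namespace NCPowerSeries

section LeadingCoeff

variable {α R : Type*} [LinearOrder α] [Ring R] [LinearOrder R]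
  {e f g x y : NCPowerSeries α R}

def LeadingCoeffPos (f : NCPowerSeries α R) : Prop :=
  ∃ w, 0 < f w ∧ ∀ v, v.shortlexKey < w.shortlexKey → f v = 0

theorem LeadingCoeffPos.mul_mul (he : LeadingCoeffPos e) (hx : x [] = 1) (hy : y [] = 1) :
    LeadingCoeffPos (x * e * y) := by
  obtain ⟨m, hm, hbelow⟩ := he
  have hshort : ∀ v : List α, v.length < m.length → e v = 0 :=
    fun v hv => hbelow v (List.shortlexKey_lt_of_length_lt hv)
  have hshort' : ∀ v : List α, v.length < m.length → (e * y) v = 0 := fun v hv => by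
    rw [mul_apply_of_forall_length_lt_right hshort hy hv.le, hshort v hv]
  have hagree : ∀ v : List α, v.length ≤ m.length → (x * e * y) v = e v := fun v hv => by
    rw [mul_assoc, mul_apply_of_forall_length_lt_left hshort' hx hv,
      mul_apply_of_forall_length_lt_right hshort hy hv]
  refine ⟨m, by rwa [hagree m le_rfl], fun v hv => ?_⟩
  rw [hagree v (List.length_le_of_shortlexKey_lt hv), hbelow v hv]

variable [IsOrderedAddMonoid R]

theorem LeadingCoeffPos.add (hf : LeadingCoeffPos f) (hg : LeadingCoeffPos g) :
    LeadingCoeffPos (f + g) := by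
  obtain ⟨u, hu, hfu⟩ := hf
  obtain ⟨v, hv, hgv⟩ := hg
  rcases lt_trichotomy u.shortlexKey v.shortlexKey with h | h | h
  · exact ⟨u, by simpa [hgv u h], fun t ht => by simp [hfu t ht, hgv t (ht.trans h)]⟩
  · obtain rfl := List.shortlexKey_injective h
    exact ⟨u, by simpa using add_pos hu hv, fun t ht => by simp [hfu t ht, hgv t ht]⟩
  · exact ⟨v, by simpa [hfu v h], fun t ht => by simp [hfu t (ht.trans h), hgv t ht]⟩

theorem LeadingCoeffPos.not_neg (hf : LeadingCoeffPos f) : ¬ LeadingCoeffPos (-f) := by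
  rintro ⟨v, hv, hgv⟩
  obtain ⟨u, hu, hfu⟩ := hf
  rcases lt_trichotomy u.shortlexKey v.shortlexKey with h | h | h
  · exact hu.ne' (neg_eq_zero.mp (hgv u h))
  · obtain rfl := List.shortlexKey_injective h
    rw [neg_apply] at hv
    exact lt_asymm hu (neg_pos.mp hv)
  · simp [hfu v h] at hv

theorem leadingCoeffPos_or_neg [WellFoundedLT α] (hf : f ≠ 0) :
    LeadingCoeffPos f ∨ LeadingCoeffPos (-f) := by
  obtain ⟨w₀, hw₀⟩ : ∃ w, f w ≠ 0 := by
    by_contra! h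
    exact hf (ext h)
  obtain ⟨w, hw, hmin⟩ :=
    List.wellFounded_shortlexKey_lt.has_min {w | f w ≠ 0} ⟨w₀, hw₀⟩
  have hbelow : ∀ v, v.shortlexKey < w.shortlexKey → f v = 0 :=
    fun v hv => by_contra fun h => hmin v h hv
  rcases (Ne.lt_or_gt hw) with h | h
  · exact Or.inr ⟨w, by simpa using h, fun v hv => by simp [hbelow v hv]⟩
  · exact Or.inl ⟨w, h, hbelow⟩

end LeadingCoeff

section Cone

variable (α R : Type*) [LinearOrder α] [Ring R] [LinearOrder R] [IsOrderedAddMonoid R]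

def nonnegCone : AddGroupCone (NCPowerSeries α R) where
  carrier := {f | f = 0 ∨ LeadingCoeffPos f}
  zero_mem' := Or.inl rfl
  add_mem' {f g} hf hg := by
    rcases hf with rfl | hf
    · simpa using hg
    rcases hg with rfl | hg
    · simpa using Or.inr hf
    exact Or.inr (hf.add hg)
  eq_zero_of_mem_of_neg_mem' {f} hf hg := by
    rcases hf with rfl | hf
    · rfl
    rcases hg with hg | hg
    · exact neg_eq_zero.mp hg
    · exact absurd hg hf.not_neg

variable {α R}

instance [WellFoundedLT α] : HasMemOrNegMem (nonnegCone α R) where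
  mem_or_neg_mem f := by
    by_cases hf : f = 0
    · exact Or.inl (Or.inl hf)
    · exact (leadingCoeffPos_or_neg hf).imp Or.inr Or.inr

theorem mul_mul_mem_nonnegCone {e x y : NCPowerSeries α R} (hx : x [] = 1) (hy : y [] = 1)
    (he : e ∈ nonnegCone α R) : x * e * y ∈ nonnegCone α R := by
  rcases he with rfl | he
  · exact Or.inl (by simp)
  · exact Or.inr (he.mul_mul hx hy)

end Cone

end NCPowerSeries

namespace FreeGroup

open NCPowerSeries

variable (α : Type*) [LinearOrder α] [WellFoundedLT α]

noncomputable abbrev magnusOrder : LinearOrder (FreeGroup α) :=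
  letI := Classical.decPred (· ∈ nonnegCone α ℤ)
  letI := LinearOrder.mkOfAddGroupCone (nonnegCone α ℤ)
  LinearOrder.lift' (fun g => (magnus α ℤ g : NCPowerSeries α ℤ))
    (Units.val_injective.comp magnus_injective)

variable {α}

theorem magnusOrder_le_iff {a b : FreeGroup α} :
    (magnusOrder α).le a b ↔
      (magnus α ℤ b : NCPowerSeries α ℤ) - magnus α ℤ a ∈ nonnegCone α ℤ :=
  Iff.rfl

theorem magnusOrder_mul_le_mul {a b : FreeGroup α} (h : (magnusOrder α).le a b)
    (c d : FreeGroup α) : (magnusOrder α).le (c * a * d) (c * b * d) := by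
  rw [magnusOrder_le_iff] at h ⊢
  have hfactor : (magnus α ℤ (c * b * d) : NCPowerSeries α ℤ) - magnus α ℤ (c * a * d) =
      magnus α ℤ c * ((magnus α ℤ b : NCPowerSeries α ℤ) - magnus α ℤ a) *
        magnus α ℤ d := by
    simp [mul_sub, sub_mul]
  rw [hfactor]
  exact mul_mul_mem_nonnegCone (magnus_apply_nil c) (magnus_apply_nil d) h

end FreeGroup

/-- Finitely generated free groups are bi-orderable. -/
theorem free_group_biorderable (k : ℕ) :
    ∃ r : FreeGroup (Fin k) → FreeGroup (Fin k) → Prop,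
      IsLinearOrder (FreeGroup (Fin k)) r ∧
      ∀ a b c d : FreeGroup (Fin k), r a b → r (c * a * d) (c * b * d) := by
  let _ := FreeGroup.magnusOrder (Fin k)
  exact ⟨(· ≤ ·), inferInstance, fun a b c d h => FreeGroup.magnusOrder_mul_le_mul h c d⟩
end

section
/- The problem of deciding, given a finite set S of elements of a finitely generated free group F(k), whether S extends to a right order of F(k), is decidable. -/
/-!
A right order of a group is a left order read through `g ↦ g⁻¹`, and a left order of a countable
group is the same as an injective `P : G → ℚ` with `P u < P v → P (g * u) < P (g * v)`.

In `FreeGroup α` it is enough to control left multiplication by letters. Restricted to the finite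
subtree of the Cayley tree spanned by the reduced words of `S` (all their suffixes), such a `P` is
an ordering in which every letter is monotone along the edges of the subtree. Conversely such an
ordered subtree always extends: a new leaf `g = a t` meets the subtree only through its parent `t`,
and placing `g` just above everything at or below some `a h` with `h < t` keeps all letters
monotone; adding the elements of the group one leaf at a time yields `P`. So `S` extends to a right
order iff some ordering of its suffix closure is letter-monotone and puts the words of `S` above
the empty word, which is a finite search.
-/

open Function

namespace List

theorem idxOf_lt_idxOf_iff_of_pairwise {β γ : Type*} [BEq β] [LawfulBEq β] [LinearOrder γ]
    {f : β → γ} {l : List β} (hl : l.Pairwise fun x y => f x < f y) {x y : β} (hx : x ∈ l)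
    (hy : y ∈ l) : l.idxOf x < l.idxOf y ↔ f x < f y := by
  have hlt : ∀ {x y}, x ∈ l → y ∈ l → l.idxOf x < l.idxOf y → f x < f y := fun hx hy h => by
    simpa only [List.getElem_idxOf] using List.pairwise_iff_getElem.1 hl _ _
      (List.idxOf_lt_length_iff.2 hx) (List.idxOf_lt_length_iff.2 hy) h
  refine ⟨hlt hx hy, fun h => ?_⟩
  rcases lt_trichotomy (l.idxOf x) (l.idxOf y) with hxy | hxy | hxy
  · exact hxy
  · exact absurd ((List.idxOf_inj hx).1 hxy ▸ h) (lt_irrefl _)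
  · exact absurd (hlt hy hx hxy) h.not_gt

theorem exists_pairwise_lt_of_injOn {β γ : Type*} [DecidableEq β] [LinearOrder γ]
    {f : β → γ} {A : List β} (hf : Set.InjOn f {x | x ∈ A}) :
    ∃ c : List β, (∀ x, x ∈ c ↔ x ∈ A) ∧ c.length ≤ A.length ∧
      c.Pairwise fun x y => f x < f y := by
  let r : β → β → Prop := fun x y => f x ≤ f y
  have : Std.Total r := ⟨fun x y => le_total (f x) (f y)⟩
  have : IsTrans β r := ⟨fun _ _ _ => le_trans⟩
  have hperm := List.perm_insertionSort r A.dedup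
  have hmem : ∀ x, x ∈ A.dedup.insertionSort r ↔ x ∈ A := fun x =>
    hperm.mem_iff.trans List.mem_dedup
  refine ⟨A.dedup.insertionSort r, hmem, hperm.length_eq.trans_le A.dedup_sublist.length_le, ?_⟩
  refine ((List.pairwise_insertionSort r _).and (hperm.nodup_iff.2 A.nodup_dedup)).imp_of_mem
    fun hx hy ⟨hle, hne⟩ => hle.lt_of_ne fun h => hne (hf ((hmem _).1 hx) ((hmem _).1 hy) h)

def listsUpTo {β : Type*} (A : List β) : ℕ → List (List β)
  | 0 => [[]]
  | n + 1 => [] :: A.flatMap fun a => (listsUpTo A n).map (a :: ·)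

theorem mem_listsUpTo {β : Type*} {A : List β} {n : ℕ} {c : List β} :
    c ∈ listsUpTo A n ↔ c.length ≤ n ∧ ∀ x ∈ c, x ∈ A := by
  induction n generalizing c with
  | zero => simp +contextual [listsUpTo]
  | succ n ih =>
    cases c with
    | nil => simp [listsUpTo]
    | cons x c => simp [listsUpTo, ih, and_comm, and_assoc, and_left_comm]

end List

structure IsLeftOrderEmbedding {G : Type*} [Mul G] (P : G → ℚ) : Prop where
  injective : Injective P
  lt_mul_left : ∀ g u v, P u < P v → P (g * u) < P (g * v)

section RightOrder

variable {G : Type*} [Group G]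

theorem IsLeftOrderEmbedding.rightOrder {P : G → ℚ} (hP : IsLeftOrderEmbedding P) :
    IsLinearOrder G (fun a b => P b⁻¹ ≤ P a⁻¹) ∧
      ∀ a b c, P b⁻¹ ≤ P a⁻¹ → P (b * c)⁻¹ ≤ P (a * c)⁻¹ := by
  refine ⟨{ refl := fun a => le_rfl
            trans := fun a b c hab hbc => hbc.trans hab
            antisymm := fun a b hab hba => inv_injective (hP.injective (le_antisymm hba hab))
            total := fun a b => le_total _ _ }, fun a b c h => ?_⟩
  rw [mul_inv_rev, mul_inv_rev]
  rcases h.eq_or_lt with h | h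
  · rw [hP.injective h]
  · exact (hP.lt_mul_left _ _ _ h).le

theorem IsLeftOrderEmbedding.one_lt_iff {P : G → ℚ} (hP : IsLeftOrderEmbedding P) (g : G) :
    P 1 < P g ↔ P g⁻¹ ≤ P 1⁻¹ ∧ g ≠ 1 := by
  rw [inv_one]
  constructor
  · intro hlt
    have := hP.lt_mul_left g⁻¹ _ _ hlt
    rw [mul_one, inv_mul_cancel] at this
    exact ⟨this.le, fun h => (h ▸ hlt).false⟩
  · rintro ⟨hle, hg⟩
    have := hP.lt_mul_left g _ _ (hle.lt_of_ne fun h => hg (inv_eq_one.1 (hP.injective h)))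
    rwa [mul_inv_cancel, mul_one] at this

theorem exists_isLeftOrderEmbedding_of_rightOrder [Countable G] {r : G → G → Prop}
    (hr : IsLinearOrder G r) (hmul : ∀ a b c, r a b → r (a * c) (b * c)) :
    ∃ P : G → ℚ, IsLeftOrderEmbedding P ∧ ∀ a b, r a b ↔ P b⁻¹ ≤ P a⁻¹ := by
  let _ : LinearOrder G :=
    { le := fun a b => r b⁻¹ a⁻¹
      le_refl := fun a => hr.refl _
      le_trans := fun a b c hab hbc => hr.trans _ _ _ hbc hab
      le_antisymm := fun a b hab hba => inv_injective (hr.antisymm _ _ hba hab)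
      le_total := fun a b => hr.total _ _
      toDecidableLE := Classical.decRel _ }
  have hle : ∀ g u v : G, u ≤ v → g * u ≤ g * v := fun g u v huv => by
    change r (g * v)⁻¹ (g * u)⁻¹
    rw [mul_inv_rev, mul_inv_rev]
    exact hmul _ _ g⁻¹ huv
  obtain ⟨f⟩ := Order.embedding_from_countable_to_dense G ℚ
  refine ⟨f, ⟨f.injective, fun g u v huv => ?_⟩, fun a b => ?_⟩
  · rw [f.lt_iff_lt] at huv ⊢
    exact lt_of_le_of_ne (hle g u v huv.le) fun h => huv.ne (mul_left_cancel h)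
  · rw [f.le_iff_le]
    change r a b ↔ r a⁻¹⁻¹ b⁻¹⁻¹
    rw [inv_inv, inv_inv]

theorem exists_rightOrder_iff_exists_isLeftOrderEmbedding [Countable G] {ι : Type*} (s : Set ι)
    (f : ι → G) :
    (∃ r : G → G → Prop, IsLinearOrder G r ∧ (∀ a b c, r a b → r (a * c) (b * c)) ∧
      ∀ i ∈ s, r 1 (f i) ∧ f i ≠ 1) ↔
    ∃ P : G → ℚ, IsLeftOrderEmbedding P ∧ ∀ i ∈ s, P 1 < P (f i) := by
  constructor
  · rintro ⟨r, hr, hmul, hs⟩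
    obtain ⟨P, hP, hrP⟩ := exists_isLeftOrderEmbedding_of_rightOrder hr hmul
    exact ⟨P, hP, fun i hi => (hP.one_lt_iff _).2 ⟨(hrP _ _).1 (hs i hi).1, (hs i hi).2⟩⟩
  · rintro ⟨P, hP, hs⟩
    exact ⟨_, hP.rightOrder.1, hP.rightOrder.2, fun i hi => (hP.one_lt_iff _).1 (hs i hi)⟩

end RightOrder

namespace FreeGroup

section Tree

variable {α : Type*} [DecidableEq α]

def parent (g : FreeGroup α) : FreeGroup α := mk g.toWord.tail

theorem toWord_parent (g : FreeGroup α) : (parent g).toWord = g.toWord.tail := by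
  rw [parent, toWord_mk]
  exact (isReduced_toWord.infix (List.tail_suffix _).isInfix).reduce_eq

theorem exists_mk_mul_parent {g : FreeGroup α} (hg : g ≠ 1) : ∃ a, mk [a] * parent g = g := by
  obtain ⟨a, w, hw⟩ := List.exists_cons_of_ne_nil (mt toWord_eq_nil_iff.1 hg)
  refine ⟨a, ?_⟩
  rw [parent, hw, List.tail_cons, mul_mk, List.singleton_append, ← hw, mk_toWord]

theorem toWord_mk_mul (a : α × Bool) (u : FreeGroup α) :
    (mk [a] * u).toWord = reduce (a :: u.toWord) := by
  rw [toWord_mul, toWord_mk, reduce_singleton, List.singleton_append]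

theorem mk_singleton_ne_inv (a : α × Bool) : mk [a] ≠ (mk [a])⁻¹ := by
  intro h
  simpa [inv_mk, invRev, toWord_mk, Prod.ext_iff] using congrArg toWord h

theorem parent_mk_mul_or (a : α × Bool) (u : FreeGroup α) :
    parent (mk [a] * u) = u ∨ parent u = mk [a] * u := by
  have h := toWord_mk_mul a u
  rcases hu : u.toWord with _ | ⟨b, w⟩
  · left
    apply toWord_injective
    rw [toWord_parent, h, hu]
    rfl
  · have hred : reduce (b :: w) = b :: w := hu ▸ reduce_toWord u
    rw [hu, reduce.cons, hred] at h
    dsimp only at h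
    split_ifs at h
    · right
      apply toWord_injective
      rw [toWord_parent, hu, h, List.tail_cons]
    · left
      apply toWord_injective
      rw [toWord_parent, h, hu, List.tail_cons]

theorem mk_mul_mem_insert_cases {S : Set (FreeGroup α)} (hS : ∀ g ∈ S, parent g ∈ S)
    {g : FreeGroup α} (hg : g ∉ S) {a : α × Bool} {u : FreeGroup α} (hu : u ∈ insert g S)
    (hau : mk [a] * u ∈ insert g S) :
    (u ∈ S ∧ mk [a] * u ∈ S) ∨ (u = parent g ∧ mk [a] * u = g) ∨
      (u = g ∧ mk [a] * u = parent g) := by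
  rcases hu with rfl | hu
  · have hau : mk [a] * u ∈ S := by
      refine hau.resolve_left fun h => mk_singleton_ne_inv a ?_
      rw [mul_eq_right.1 h, inv_one]
    refine Or.inr (Or.inr ⟨rfl, ?_⟩)
    refine ((parent_mk_mul_or a u).resolve_left fun h => hg ?_).symm
    exact h ▸ hS _ hau
  · rcases hau with hau | hau
    · refine Or.inr (Or.inl ⟨?_, hau⟩)
      rcases parent_mk_mul_or a u with h | h
      · rw [← h, hau]
      · have := hS u hu
        rw [h, hau] at this
        exact absurd this hg
    · exact Or.inl ⟨hu, hau⟩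

end Tree

theorem lt_mul_left_of_forall_mk {α β : Type*} [LT β] {f : FreeGroup α → β}
    (hf : ∀ a u v, f u < f v → f (mk [a] * u) < f (mk [a] * v)) (g : FreeGroup α)
    {u v : FreeGroup α} (huv : f u < f v) : f (g * u) < f (g * v) := by
  induction g generalizing u v with
  | C1 => simpa using huv
  | of a => exact hf (a, true) u v huv
  | inv_of a _ => exact hf (a, false) u v huv
  | mul g h hg hh => simpa only [mul_assoc] using hg (hh huv)

/-- A finite subtree of the Cayley tree, ordered by `pos` so that every letter is monotone along
the edges of the subtree. -/
structure OrderedSubtree (α : Type*) [DecidableEq α] where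
  -- not `mk`, which would shadow `FreeGroup.mk` inside `namespace OrderedSubtree`
  ofPos ::
  carrier : Set (FreeGroup α)
  pos : FreeGroup α → ℚ
  finite : carrier.Finite
  one_mem : 1 ∈ carrier
  parent_mem : ∀ g ∈ carrier, parent g ∈ carrier
  injOn : Set.InjOn pos carrier
  pos_mk_mul_lt : ∀ (a : α × Bool), ∀ u ∈ carrier, ∀ v ∈ carrier, mk [a] * u ∈ carrier →
    mk [a] * v ∈ carrier → pos u < pos v → pos (mk [a] * u) < pos (mk [a] * v)

namespace OrderedSubtree

variable {α : Type*} [DecidableEq α]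

instance : Preorder (OrderedSubtree α) where
  le T T' := T.carrier ⊆ T'.carrier ∧ ∀ g ∈ T.carrier, T'.pos g = T.pos g
  le_refl _ := ⟨subset_rfl, fun _ _ => rfl⟩
  le_trans _ _ _ h₁₂ h₂₃ :=
    ⟨h₁₂.1.trans h₂₃.1, fun g hg => (h₂₃.2 g (h₁₂.1 hg)).trans (h₁₂.2 g hg)⟩

variable (T : OrderedSubtree α)

/-- Where a new leaf `mk [a] * t` must go: if `h < t` then `mk [a] * h` lies below it, and so does
everything below `mk [a] * h`. -/
def lowerCut (a : α × Bool) (t : FreeGroup α) : Set (FreeGroup α) :=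
  {u ∈ T.carrier | ∃ h ∈ T.carrier, mk [a] * h ∈ T.carrier ∧ T.pos h < T.pos t ∧
    T.pos u ≤ T.pos (mk [a] * h)}

theorem exists_pos_lt_iff_mem_lowerCut (a : α × Bool) (t : FreeGroup α) :
    ∃ q, ∀ u ∈ T.carrier, (T.pos u < q ↔ u ∈ T.lowerCut a t) ∧ T.pos u ≠ q := by
  have hsep : ∀ x ∈ T.pos '' T.lowerCut a t, ∀ y ∈ T.pos '' (T.carrier \ T.lowerCut a t), x < y := by
    rintro _ ⟨u, ⟨-, h, hh, hah, hht, hle⟩, rfl⟩ _ ⟨v, ⟨hv, hvcut⟩, rfl⟩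
    by_contra hvu
    exact hvcut ⟨hv, h, hh, hah, hht, (not_lt.1 hvu).trans hle⟩
  obtain ⟨q, hlow, hhigh⟩ := Set.Finite.exists_between'
    ((T.finite.subset (Set.sep_subset _ _)).image T.pos) (T.finite.sdiff.image T.pos) hsep
  refine ⟨q, fun u hu => ?_⟩
  by_cases hcut : u ∈ T.lowerCut a t
  · have hq := hlow _ (Set.mem_image_of_mem _ hcut)
    exact ⟨iff_of_true hq hcut, hq.ne⟩
  · have hq := hhigh _ (Set.mem_image_of_mem _ ⟨hu, hcut⟩)
    exact ⟨iff_of_false hq.not_gt hcut, hq.ne'⟩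

theorem pos_mk_mul_lt_iff {a : α × Bool} {t : FreeGroup α} {q : ℚ}
    (hq : ∀ u ∈ T.carrier, (T.pos u < q ↔ u ∈ T.lowerCut a t) ∧ T.pos u ≠ q) {w : FreeGroup α}
    (hw : w ∈ T.carrier) (haw : mk [a] * w ∈ T.carrier) :
    T.pos (mk [a] * w) < q ↔ T.pos w < T.pos t := by
  rw [(hq _ haw).1]
  refine ⟨fun ⟨_, h, hh, hah, hht, hle⟩ => ?_, fun hwt => ⟨haw, w, hw, haw, hwt, le_rfl⟩⟩
  by_contra hwt
  exact (hle.trans_lt (T.pos_mk_mul_lt a h hh w hw hah haw (hht.trans_le (not_lt.1 hwt)))).false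

theorem lt_pos_mk_mul_iff {a : α × Bool} {t : FreeGroup α} (ht : t ∈ T.carrier) {q : ℚ}
    (hq : ∀ u ∈ T.carrier, (T.pos u < q ↔ u ∈ T.lowerCut a t) ∧ T.pos u ≠ q) {w : FreeGroup α}
    (hw : w ∈ T.carrier) (haw : mk [a] * w ∈ T.carrier) (hwt : w ≠ t) :
    q < T.pos (mk [a] * w) ↔ T.pos t < T.pos w := by
  rw [← not_le, (hq _ haw).2.le_iff_lt, T.pos_mk_mul_lt_iff hq hw haw, not_lt,
    (T.injOn.ne ht hw hwt.symm).le_iff_lt]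

theorem update_pos_mk_mul_lt_of_mem {g : FreeGroup α} (hg : g ∉ T.carrier) {a : α × Bool}
    (ha : mk [a] * parent g = g) (hpar : parent g ∈ T.carrier) {q : ℚ}
    (hq : ∀ u ∈ T.carrier, (T.pos u < q ↔ u ∈ T.lowerCut a (parent g)) ∧ T.pos u ≠ q)
    (x : α × Bool) {u : FreeGroup α} (hu : u ∈ T.carrier) (hxu : mk [x] * u ∈ T.carrier)
    {v : FreeGroup α} (hv : v ∈ insert g T.carrier) (hxv : mk [x] * v ∈ insert g T.carrier)
    (huv : update T.pos g q u < update T.pos g q v) :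
    update T.pos g q (mk [x] * u) < update T.pos g q (mk [x] * v) := by
  have hold : ∀ w ∈ T.carrier, update T.pos g q w = T.pos w := fun w hw =>
    update_of_ne (ne_of_mem_of_not_mem hw hg) _ _
  rw [hold u hu] at huv
  rw [hold _ hxu]
  rcases mk_mul_mem_insert_cases T.parent_mem hg hv hxv with ⟨hv, hxv⟩ | ⟨rfl, hxv⟩ | ⟨hv, hxv⟩
  · rw [hold v hv] at huv
    rw [hold _ hxv]
    exact T.pos_mk_mul_lt x u hu v hv hxu hxv huv
  · have hxa : mk [x] = mk [a] := mul_right_cancel (hxv.trans ha.symm)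
    rw [hold _ hpar] at huv
    rw [hxa] at hxu hxv ⊢
    rw [hxv, update_self]
    exact (T.pos_mk_mul_lt_iff hq hu hxu).2 huv
  · subst v
    have hxa : mk [x] = (mk [a])⁻¹ :=
      eq_inv_of_mul_eq_one_left (mul_eq_right.1 (by rw [mul_assoc, ha, hxv]))
    rw [update_self] at huv
    rw [hxv, hold _ hpar]
    rw [hxa] at hxu ⊢
    have hau : mk [a] * ((mk [a])⁻¹ * u) ∈ T.carrier := by rwa [mul_inv_cancel_left]
    have := T.pos_mk_mul_lt_iff hq hxu hau
    rw [mul_inv_cancel_left] at this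
    exact this.1 huv

theorem update_pos_mk_mul_lt {g : FreeGroup α} (hg : g ∉ T.carrier) {a : α × Bool}
    (ha : mk [a] * parent g = g) (hpar : parent g ∈ T.carrier) {q : ℚ}
    (hq : ∀ u ∈ T.carrier, (T.pos u < q ↔ u ∈ T.lowerCut a (parent g)) ∧ T.pos u ≠ q)
    (x : α × Bool) {u : FreeGroup α} (hu : u ∈ insert g T.carrier) {v : FreeGroup α}
    (hv : v ∈ insert g T.carrier) (hxu : mk [x] * u ∈ insert g T.carrier)
    (hxv : mk [x] * v ∈ insert g T.carrier) (huv : update T.pos g q u < update T.pos g q v) :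
    update T.pos g q (mk [x] * u) < update T.pos g q (mk [x] * v) := by
  have hold : ∀ w ∈ T.carrier, update T.pos g q w = T.pos w := fun w hw =>
    update_of_ne (ne_of_mem_of_not_mem hw hg) _ _
  have hx_of_t : mk [x] * parent g = g → mk [x] = mk [a] := fun h =>
    mul_right_cancel (h.trans ha.symm)
  have hx_of_g : mk [x] * g = parent g → mk [x] = (mk [a])⁻¹ := fun h =>
    eq_inv_of_mul_eq_one_left (mul_eq_right.1 (by rw [mul_assoc, ha, h]))
  -- The new edges are `parent g → g` (by `a`) and `g → parent g` (by `a⁻¹`); since `a ≠ a⁻¹`,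
  -- at most one of them occurs for a given letter `x`.
  rcases mk_mul_mem_insert_cases T.parent_mem hg hu hxu with ⟨hu, hxu⟩ | ⟨rfl, hxu⟩ | ⟨hu, hxu⟩
  · exact T.update_pos_mk_mul_lt_of_mem hg ha hpar hq x hu hxu hv hxv huv
  all_goals rcases mk_mul_mem_insert_cases T.parent_mem hg hv hxv with
    ⟨hv, hxv⟩ | ⟨rfl, hxv⟩ | ⟨hv, hxv⟩
  all_goals try subst u
  all_goals try subst v
  · rw [hold _ hpar, hold v hv] at huv
    rw [hx_of_t hxu] at hxv ⊢
    rw [← hx_of_t hxu, hxu, update_self, hx_of_t hxu, hold _ hxv]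
    exact (T.lt_pos_mk_mul_iff hpar hq hv hxv fun h => huv.ne' (congrArg T.pos h)).2 huv
  · exact absurd huv (lt_irrefl _)
  · exact absurd ((hx_of_t hxu).symm.trans (hx_of_g hxv)) (mk_singleton_ne_inv a)
  · rw [update_self, hold v hv] at huv
    rw [hx_of_g hxu] at hxv ⊢
    rw [← hx_of_g hxu, hxu, hold _ hpar, hx_of_g hxu, hold _ hxv]
    have hav : mk [a] * ((mk [a])⁻¹ * v) ∈ T.carrier := by rwa [mul_inv_cancel_left]
    have hne : (mk [a])⁻¹ * v ≠ parent g := fun h => hg (by rwa [← ha, ← h, mul_inv_cancel_left])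
    have := T.lt_pos_mk_mul_iff hpar hq hxv hav hne
    rw [mul_inv_cancel_left] at this
    exact this.1 huv
  · exact absurd ((hx_of_t hxv).symm.trans (hx_of_g hxu)) (mk_singleton_ne_inv a)
  · exact absurd huv (lt_irrefl _)

theorem exists_le_mem_of_parent_mem {g : FreeGroup α} (hpar : parent g ∈ T.carrier) :
    ∃ T' ≥ T, g ∈ T'.carrier := by
  by_cases hg : g ∈ T.carrier
  · exact ⟨T, le_rfl, hg⟩
  obtain ⟨a, ha⟩ := exists_mk_mul_parent (ne_of_mem_of_not_mem T.one_mem hg).symm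
  obtain ⟨q, hq⟩ := T.exists_pos_lt_iff_mem_lowerCut a (parent g)
  have hold : Set.EqOn T.pos (update T.pos g q) T.carrier := fun u hu =>
    (update_of_ne (ne_of_mem_of_not_mem hu hg) _ _).symm
  refine ⟨
    { carrier := insert g T.carrier
      pos := update T.pos g q
      finite := T.finite.insert g
      one_mem := Set.mem_insert_of_mem _ T.one_mem
      parent_mem := ?_
      injOn := ?_
      pos_mk_mul_lt := fun x u hu v hv => T.update_pos_mk_mul_lt hg ha hpar hq x hu hv },
    ⟨Set.subset_insert _ _, fun u hu => (hold hu).symm⟩, Set.mem_insert _ _⟩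
  · rintro u (rfl | hu)
    · exact Set.mem_insert_of_mem _ hpar
    · exact Set.mem_insert_of_mem _ (T.parent_mem u hu)
  · refine (Set.injOn_insert hg).2 ⟨T.injOn.congr hold, ?_⟩
    rintro ⟨u, hu, hqu⟩
    rw [update_self, ← hold hu] at hqu
    exact (hq u hu).2 hqu

theorem exists_le_mem (g : FreeGroup α) : ∃ T' ≥ T, g ∈ T'.carrier := by
  obtain ⟨n, hn⟩ : ∃ n, g.toWord.length = n := ⟨_, rfl⟩
  induction n generalizing g with
  | zero =>
    rw [List.length_eq_zero_iff, toWord_eq_nil_iff] at hn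
    exact ⟨T, le_rfl, hn ▸ T.one_mem⟩
  | succ n ih =>
    obtain ⟨T₁, hT₁, hpar⟩ := ih (parent g) (by rw [toWord_parent, List.length_tail, hn]; rfl)
    obtain ⟨T₂, hT₂, hg⟩ := T₁.exists_le_mem_of_parent_mem hpar
    exact ⟨T₂, hT₁.trans hT₂, hg⟩

theorem exists_pos_of_monotone (Ts : ℕ → OrderedSubtree α) (hTs : Monotone Ts)
    (hcover : ∀ g, ∃ n, g ∈ (Ts n).carrier) :
    ∃ P : FreeGroup α → ℚ, Injective P ∧ (∀ n, ∀ g ∈ (Ts n).carrier, P g = (Ts n).pos g) ∧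
      ∀ a u v, P u < P v → P (mk [a] * u) < P (mk [a] * v) := by
  choose N hN using hcover
  have hP : ∀ n, ∀ g ∈ (Ts n).carrier, (Ts (N g)).pos g = (Ts n).pos g := fun n g hg =>
    ((hTs (le_max_left (N g) n)).2 g (hN g)).symm.trans ((hTs (le_max_right _ n)).2 g hg)
  have hcommon : ∀ s : Finset (FreeGroup α), ∀ g ∈ s, g ∈ (Ts (s.sup N)).carrier := fun s g hg =>
    (hTs (Finset.le_sup hg)).1 (hN g)
  refine ⟨fun g => (Ts (N g)).pos g, fun u v huv => ?_, hP, fun a u v huv => ?_⟩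
  · have hu := hcommon {u, v} u (by simp)
    have hv := hcommon {u, v} v (by simp)
    exact (Ts _).injOn hu hv ((hP _ u hu).symm.trans (huv.trans (hP _ v hv)))
  · let s : Finset (FreeGroup α) := {u, v, mk [a] * u, mk [a] * v}
    have hu := hcommon s u (by simp [s])
    have hv := hcommon s v (by simp [s])
    have hau := hcommon s (mk [a] * u) (by simp [s])
    have hav := hcommon s (mk [a] * v) (by simp [s])
    simp only [hP _ _ hu, hP _ _ hv, hP _ _ hau, hP _ _ hav] at huv ⊢
    exact (Ts _).pos_mk_mul_lt a u hu v hv hau hav huv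

theorem exists_isLeftOrderEmbedding_eqOn [Countable α] :
    ∃ P : FreeGroup α → ℚ, IsLeftOrderEmbedding P ∧ Set.EqOn P T.pos T.carrier := by
  obtain ⟨e, he⟩ := exists_surjective_nat (FreeGroup α)
  choose F hF hmem using fun (T : OrderedSubtree α) g => T.exists_le_mem g
  let Ts : ℕ → OrderedSubtree α := fun n => Nat.rec T (fun n Tn => F Tn (e n)) n
  have hTs : Monotone Ts := monotone_nat_of_le_succ fun n => hF (Ts n) (e n)
  have hcover : ∀ g, ∃ n, g ∈ (Ts n).carrier := fun g => by
    obtain ⟨n, rfl⟩ := he g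
    exact ⟨n + 1, hmem _ _⟩
  obtain ⟨P, hinj, hP, hmono⟩ := exists_pos_of_monotone Ts hTs hcover
  exact ⟨P, ⟨hinj, lt_mul_left_of_forall_mk hmono⟩, hP 0⟩

end OrderedSubtree

section WordLists

variable {α : Type*} [DecidableEq α]

/-- An `OrderedSubtree` written as the list of its reduced words, ordered by position. -/
def IsOrderedSubtreeList (c : List (List (α × Bool))) : Prop :=
  [] ∈ c ∧ (∀ u ∈ c, reduce u = u ∧ u.tail ∈ c) ∧
    ∀ (a : α × Bool), ∀ u ∈ c, ∀ v ∈ c, reduce (a :: u) ∈ c → reduce (a :: v) ∈ c →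
      c.idxOf u < c.idxOf v → c.idxOf (reduce (a :: u)) < c.idxOf (reduce (a :: v))

def OrderedSubtree.ofList {c : List (List (α × Bool))} (hc : IsOrderedSubtreeList c) :
    OrderedSubtree α where
  carrier := {g | g.toWord ∈ c}
  pos g := c.idxOf g.toWord
  finite := c.finite_toSet.preimage toWord_injective.injOn
  one_mem := by simpa [toWord_one] using hc.1
  parent_mem g hg := by
    rw [Set.mem_ofPred_eq, toWord_parent]
    exact (hc.2.1 _ hg).2
  injOn u hu v hv huv := toWord_injective ((List.idxOf_inj hu).1 (Nat.cast_injective huv))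
  pos_mk_mul_lt a u hu v hv hau hav huv := by
    simp only [Set.mem_ofPred_eq, toWord_mk_mul, Nat.cast_lt] at *
    exact hc.2.2 a _ hu _ hv hau hav huv

theorem IsOrderedSubtreeList.exists_isLeftOrderEmbedding [Countable α]
    {c : List (List (α × Bool))} (hc : IsOrderedSubtreeList c) :
    ∃ P : FreeGroup α → ℚ, IsLeftOrderEmbedding P ∧
      ∀ u ∈ c, ∀ v ∈ c, c.idxOf u < c.idxOf v → P (mk u) < P (mk v) := by
  obtain ⟨P, hP, hpos⟩ := (OrderedSubtree.ofList hc).exists_isLeftOrderEmbedding_eqOn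
  have hmem : ∀ u ∈ c, mk u ∈ (OrderedSubtree.ofList hc).carrier ∧ P (mk u) = c.idxOf u :=
    fun u hu => by
      have hmk : (mk u).toWord = u := by rw [toWord_mk, (hc.2.1 u hu).1]
      have hmem : mk u ∈ (OrderedSubtree.ofList hc).carrier := by
        rwa [OrderedSubtree.ofList, Set.mem_ofPred_eq, hmk]
      exact ⟨hmem, (hpos hmem).trans (congrArg (fun w => (c.idxOf w : ℚ)) hmk)⟩
  refine ⟨P, hP, fun u hu v hv huv => ?_⟩
  rw [(hmem u hu).2, (hmem v hv).2]
  exact_mod_cast huv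

theorem _root_.IsLeftOrderEmbedding.exists_isOrderedSubtreeList {P : FreeGroup α → ℚ}
    (hP : IsLeftOrderEmbedding P) {A : List (List (α × Bool))}
    (hnil : [] ∈ A) (hA : ∀ u ∈ A, reduce u = u ∧ u.tail ∈ A) :
    ∃ c, (∀ u, u ∈ c ↔ u ∈ A) ∧ c.length ≤ A.length ∧ IsOrderedSubtreeList c ∧
      ∀ u ∈ c, ∀ v ∈ c, (c.idxOf u < c.idxOf v ↔ P (mk u) < P (mk v)) := by
  have hinj : Set.InjOn (fun u => P (mk u)) {u | u ∈ A} := fun u hu v hv huv => by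
    rw [← (hA u hu).1, ← (hA v hv).1]
    exact reduce.sound (hP.injective huv)
  obtain ⟨c, hmem, hlen, hc⟩ := List.exists_pairwise_lt_of_injOn hinj
  have hidx : ∀ u ∈ c, ∀ v ∈ c, (c.idxOf u < c.idxOf v ↔ P (mk u) < P (mk v)) :=
    fun u hu v hv => List.idxOf_lt_idxOf_iff_of_pairwise hc hu hv
  refine ⟨c, hmem, hlen, ⟨(hmem _).2 hnil, fun u hu => ?_, fun a u hu v hv hau hav huv => ?_⟩, hidx⟩
  · exact ⟨(hA u ((hmem u).1 hu)).1, (hmem _).2 (hA u ((hmem u).1 hu)).2⟩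
  · rw [hidx _ hau _ hav, reduce.self, reduce.self, ← List.singleton_append, ← mul_mk,
      ← List.singleton_append, ← mul_mk]
    exact hP.lt_mul_left _ _ _ ((hidx u hu v hv).1 huv)

def suffixClosure (L : List (List (α × Bool))) : List (List (α × Bool)) :=
  [] :: L.flatMap fun w => (reduce w).tails

theorem reduce_mem_suffixClosure {L : List (List (α × Bool))} {w : List (α × Bool)} (hw : w ∈ L) :
    reduce w ∈ suffixClosure L :=
  List.mem_cons_of_mem _ (List.mem_flatMap.2 ⟨w, hw, (List.mem_tails _ _).2 (List.suffix_refl _)⟩)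

theorem reduce_eq_and_tail_mem_suffixClosure {L : List (List (α × Bool))} {u : List (α × Bool)}
    (hu : u ∈ suffixClosure L) : reduce u = u ∧ u.tail ∈ suffixClosure L := by
  rcases List.mem_cons.1 hu with rfl | hu
  · exact ⟨rfl, hu⟩
  obtain ⟨w, hw, hsuf⟩ := List.mem_flatMap.1 hu
  rw [List.mem_tails] at hsuf
  have hred : IsReduced (reduce w) := by simpa only [toWord_mk] using isReduced_toWord (x := mk w)
  exact ⟨(hred.infix hsuf.isInfix).reduce_eq, List.mem_cons_of_mem _
    (List.mem_flatMap.2 ⟨w, hw, (List.mem_tails _ _).2 ((List.tail_suffix u).trans hsuf)⟩)⟩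

/-- The finite search: lists of at most `n` words from the suffix closure, which has `n` entries
counted with repetition, include a duplicate-free ordering of it. -/
def HasPositiveOrderedSubtreeList (L : List (List (α × Bool))) : Prop :=
  ∃ c ∈ List.listsUpTo (suffixClosure L) (suffixClosure L).length, IsOrderedSubtreeList c ∧
    ∀ w ∈ L, reduce w ∈ c ∧ c.idxOf [] < c.idxOf (reduce w)

theorem exists_isLeftOrderEmbedding_iff [Countable α] (L : List (List (α × Bool))) :
    (∃ P : FreeGroup α → ℚ, IsLeftOrderEmbedding P ∧ ∀ w ∈ L, P 1 < P (mk w)) ↔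
      HasPositiveOrderedSubtreeList L := by
  constructor
  · rintro ⟨P, hP, hL⟩
    obtain ⟨c, hmem, hlen, hc, hidx⟩ := hP.exists_isOrderedSubtreeList
      (List.mem_cons_self ..) fun u hu => reduce_eq_and_tail_mem_suffixClosure hu
    refine ⟨c, List.mem_listsUpTo.2 ⟨hlen, fun u hu => (hmem u).1 hu⟩, hc, fun w hw => ?_⟩
    have hwc := (hmem _).2 (reduce_mem_suffixClosure hw)
    refine ⟨hwc, (hidx _ hc.1 _ hwc).2 ?_⟩
    rw [reduce.self, ← one_eq_mk]
    exact hL w hw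
  · rintro ⟨c, -, hc, hL⟩
    obtain ⟨P, hP, hpos⟩ := hc.exists_isLeftOrderEmbedding
    refine ⟨P, hP, fun w hw => ?_⟩
    rw [one_eq_mk, ← reduce.self (L := w)]
    exact hpos _ hc.1 _ (hL w hw).1 (hL w hw).2

end WordLists

end FreeGroup

section Computability

open Primrec

theorem PrimrecPred.forall_mem_list_comp {β γ : Type*} [Primcodable β] [Primcodable γ]
    {f : β → List γ} {p : β → γ → Prop} (hf : Primrec f) (hp : PrimrecRel p) :
    PrimrecPred fun b => ∀ c ∈ f b, p b c :=
  (PrimrecRel.forall_mem_list hp.swap).comp hf Primrec.id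

theorem PrimrecPred.exists_mem_list_comp {β γ : Type*} [Primcodable β] [Primcodable γ]
    {f : β → List γ} {p : β → γ → Prop} (hf : Primrec f) (hp : PrimrecRel p) :
    PrimrecPred fun b => ∃ c ∈ f b, p b c :=
  (PrimrecRel.exists_mem_list hp.swap).comp hf Primrec.id

theorem PrimrecPred.imp {β : Type*} [Primcodable β] {p q : β → Prop} (hp : PrimrecPred p)
    (hq : PrimrecPred q) : PrimrecPred fun b => p b → q b :=
  (hp.not.or hq).of_eq fun _ => imp_iff_not_or.symm

theorem PrimrecRel.mem_list {β : Type*} [Primcodable β] [DecidableEq β] :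
    PrimrecRel fun (b : β) (l : List β) => b ∈ l :=
  (PrimrecRel.exists_mem_list Primrec.eq).swap.of_eq fun _ _ => exists_eq_right

/-- `List.idxOf` on lists of words uses the structural `BEq` of lists, while
`Primrec.list_idxOf` is stated for the one derived from `DecidableEq`. -/
theorem Primrec.list_idxOf_lawful {β : Type*} [Primcodable β] [DecidableEq β] [BEq β]
    [LawfulBEq β] : Primrec₂ fun (b : β) (l : List β) => l.idxOf b :=
  Primrec.list_idxOf.of_eq fun _ _ => by congr; exact lawful_beq_subsingleton _ _

theorem List.tails_eq_foldr {β : Type*} (l : List β) :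
    l.tails = l.foldr (fun x r => (x :: r.headI) :: r) [[]] := by
  induction l with
  | nil => rfl
  | cons x l ih =>
    rw [List.foldr_cons, ← ih, List.tails_cons]
    cases l <;> rfl

theorem Primrec.list_tails {β : Type*} [Primcodable β] : Primrec (@List.tails β) :=
  (list_foldr Primrec.id (const [[]]) (list_cons.comp
    (list_cons.comp (fst.comp snd) (list_headI.comp (snd.comp snd))) (snd.comp snd)).to₂).of_eq
    fun l => (List.tails_eq_foldr l).symm

theorem Primrec.list_listsUpTo {β : Type*} [Primcodable β] : Primrec₂ (@List.listsUpTo β) := by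
  have hstep : Primrec₂ fun (A : List β) (p : ℕ × List (List β)) =>
      [] :: A.flatMap fun a => p.2.map (a :: ·) :=
    (list_cons.comp (const []) (list_flatMap fst
      (list_map (snd.comp (snd.comp fst)) (list_cons.comp (snd.comp fst) snd).to₂).to₂)).to₂
  refine (nat_rec (const [[]]) hstep).of_eq fun A n => ?_
  induction n with
  | zero => rfl
  | succ n ih => simp only [List.listsUpTo, ← ih]

namespace FreeGroup

variable {α : Type*} [DecidableEq α]

theorem reduce_eq_foldr (L : List (α × Bool)) :
    reduce L = L.foldr (fun x r => List.casesOn r [x] fun hd tl =>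
      if x.1 = hd.1 ∧ x.2 = !hd.2 then tl else x :: hd :: tl) [] := by
  induction L with
  | nil => rfl
  | cons x L ih => rw [reduce.cons, ih, List.foldr_cons]

variable [Primcodable α]

theorem primrec_reduce : Primrec (reduce : List (α × Bool) → List (α × Bool)) := by
  have hcancel : PrimrecRel fun (x y : α × Bool) => x.1 = y.1 ∧ x.2 = !y.2 :=
    (Primrec.eq.comp (fst.comp fst) (fst.comp snd)).and
      (Primrec.eq.comp (snd.comp fst) (Primrec.not.comp (snd.comp snd)))
  have hstep : Primrec₂ fun (x : α × Bool) (r : List (α × Bool)) =>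
      List.casesOn (motive := fun _ => List (α × Bool)) r [x] fun hd tl =>
        if x.1 = hd.1 ∧ x.2 = !hd.2 then tl else x :: hd :: tl :=
    (list_casesOn snd (list_cons.comp fst (const [])) (Primrec.ite
      (hcancel.comp (fst.comp fst) (fst.comp snd)) (snd.comp snd)
      (list_cons.comp (fst.comp fst) (list_cons.comp (fst.comp snd) (snd.comp snd)))).to₂).to₂
  exact (list_foldr Primrec.id (const []) (hstep.comp (fst.comp snd) (snd.comp snd)).to₂).of_eq
    fun L => (reduce_eq_foldr L).symm

theorem primrec_suffixClosure : Primrec (suffixClosure : List (List (α × Bool)) → _) :=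
  list_cons.comp (const [])
    (list_flatMap Primrec.id (list_tails.comp (primrec_reduce.comp snd)).to₂)

theorem primrecPred_isOrderedSubtreeList [Fintype α] :
    PrimrecPred (IsOrderedSubtreeList : List (List (α × Bool)) → Prop) := by
  have hmem : PrimrecRel fun (u : List (α × Bool)) (c : List (List (α × Bool))) => u ∈ c :=
    PrimrecRel.mem_list
  have hidx : Primrec₂ fun (u : List (α × Bool)) (c : List (List (α × Bool))) => c.idxOf u :=
    Primrec.list_idxOf_lawful
  have hbody : PrimrecRel fun (p : (List (List (α × Bool)) × (α × Bool)) × List (α × Bool))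
      (v : List (α × Bool)) => reduce (p.1.2 :: p.2) ∈ p.1.1 → reduce (p.1.2 :: v) ∈ p.1.1 →
        p.1.1.idxOf p.2 < p.1.1.idxOf v →
          p.1.1.idxOf (reduce (p.1.2 :: p.2)) < p.1.1.idxOf (reduce (p.1.2 :: v)) := by
    have hc : Primrec fun q : ((List (List (α × Bool)) × (α × Bool)) × List (α × Bool)) ×
        List (α × Bool) => q.1.1.1 := fst.comp (fst.comp fst)
    have hau : Primrec fun q : ((List (List (α × Bool)) × (α × Bool)) × List (α × Bool)) ×
        List (α × Bool) => reduce (q.1.1.2 :: q.1.2) :=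
      primrec_reduce.comp (list_cons.comp (snd.comp (fst.comp fst)) (snd.comp fst))
    have hav : Primrec fun q : ((List (List (α × Bool)) × (α × Bool)) × List (α × Bool)) ×
        List (α × Bool) => reduce (q.1.1.2 :: q.2) :=
      primrec_reduce.comp (list_cons.comp (snd.comp (fst.comp fst)) snd)
    exact (hmem.comp hau hc).imp ((hmem.comp hav hc).imp
      ((Primrec.nat_lt.comp (hidx.comp (snd.comp fst) hc) (hidx.comp snd hc)).imp
        (Primrec.nat_lt.comp (hidx.comp hau hc) (hidx.comp hav hc))))
  have hcompat : PrimrecPred fun c : List (List (α × Bool)) =>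
      ∀ a ∈ (Finset.univ : Finset (α × Bool)).toList, ∀ u ∈ c, ∀ v ∈ c,
        reduce (a :: u) ∈ c → reduce (a :: v) ∈ c → c.idxOf u < c.idxOf v →
          c.idxOf (reduce (a :: u)) < c.idxOf (reduce (a :: v)) :=
    PrimrecPred.forall_mem_list_comp (const _)
      (PrimrecPred.forall_mem_list_comp fst (PrimrecPred.forall_mem_list_comp (fst.comp fst) hbody))
  have hclosed : PrimrecPred fun c : List (List (α × Bool)) =>
      ∀ u ∈ c, reduce u = u ∧ u.tail ∈ c :=
    PrimrecPred.forall_mem_list_comp Primrec.id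
      ((Primrec.eq.comp (primrec_reduce.comp snd) snd).and (hmem.comp (list_tail.comp snd) fst))
  refine ((hmem.comp (const []) Primrec.id).and (hclosed.and hcompat)).of_eq fun c => ?_
  simp only [IsOrderedSubtreeList, id, Finset.mem_toList, Finset.mem_univ, forall_const]

theorem primrecPred_hasPositiveOrderedSubtreeList [Fintype α] :
    PrimrecPred (HasPositiveOrderedSubtreeList : List (List (α × Bool)) → Prop) := by
  have hmem : PrimrecRel fun (u : List (α × Bool)) (c : List (List (α × Bool))) => u ∈ c :=
    PrimrecRel.mem_list
  have hidx : Primrec₂ fun (u : List (α × Bool)) (c : List (List (α × Bool))) => c.idxOf u :=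
    Primrec.list_idxOf_lawful
  have hpositive : PrimrecRel fun (p : List (List (α × Bool)) × List (List (α × Bool)))
      (w : List (α × Bool)) => reduce w ∈ p.2 ∧ p.2.idxOf [] < p.2.idxOf (reduce w) := by
    have hc : Primrec fun q : (List (List (α × Bool)) × List (List (α × Bool))) ×
        List (α × Bool) => q.1.2 := snd.comp fst
    have hw : Primrec fun q : (List (List (α × Bool)) × List (List (α × Bool))) ×
        List (α × Bool) => reduce q.2 := primrec_reduce.comp snd
    exact (hmem.comp hw hc).and (Primrec.nat_lt.comp (hidx.comp (const []) hc) (hidx.comp hw hc))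
  exact PrimrecPred.exists_mem_list_comp (list_listsUpTo.comp primrec_suffixClosure
    (list_length.comp primrec_suffixClosure)) ((primrecPred_isOrderedSubtreeList.comp snd).and
      (PrimrecPred.forall_mem_list_comp fst hpositive))

end FreeGroup

end Computability

/-- Decidability of extending a finite subset of a finitely generated free
group (given as a list of words) to a right order: the predicate is computable. -/
theorem right_order_extension_decidable (k : ℕ) :
    ComputablePred (fun L : List (List (Fin k × Bool)) =>
      ∃ r : FreeGroup (Fin k) → FreeGroup (Fin k) → Prop,
        IsLinearOrder _ r ∧
        (∀ a b c, r a b → r (a * c) (b * c)) ∧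
        (∀ w ∈ L, r 1 (FreeGroup.mk w) ∧ FreeGroup.mk w ≠ 1)) :=
  (FreeGroup.primrecPred_hasPositiveOrderedSubtreeList (α := Fin k)).computablePred.of_eq fun L =>
    ((exists_rightOrder_iff_exists_isLeftOrderEmbedding {w | w ∈ L} FreeGroup.mk).trans
      (FreeGroup.exists_isLeftOrderEmbedding_iff L)).symm
end
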